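/- arXiv:1911.05840 — 9 statements merged into one kernel-verified Lean document; each statement's English description precedes it below -/
import Mathlib

section
/- Let K be a positive integer and let ε be a real number with 0 ≤ ε < 1. Define S̄ = (1−ε)^K · ∑_{i ∈ ℕ^K} (i_1+⋯+i_K+K) · ε^{i_1+⋯+i_K} and S2 = (1−ε)^K · ∑_{i ∈ ℕ^K} (i_1+⋯+i_K+K)² · ε^{i_1+⋯+i_K}, where both are infinite sums over all vectors i = (i_1,…,i_K) of nonnegative integers. Then S̄ + S2/(2·S̄) = 3K/2 + ε(3K+1)/(2(1−ε)), and this quantity also equals (K/(1−ε))·(3/2 + ε/(2K)). -/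
open Finset

section aux

variable {ε : ℝ}

private lemma hs_sq (hε0 : 0 ≤ ε) (hε1 : ε < 1) :
    HasSum (fun n : ℕ => (n : ℝ) ^ 2 * ε ^ n) (ε * (1 + ε) / (1 - ε) ^ 3) := by
  have hε : ‖ε‖ < 1 := by rw [Real.norm_eq_abs, abs_of_nonneg hε0]; exact hε1
  have h2 : HasSum (fun n : ℕ => (((n + 2).choose 2 : ℕ) : ℝ) * ε ^ n) (1 / (1 - ε) ^ 3) := by
    simpa using hasSum_choose_mul_geometric_of_norm_lt_one 2 hε
  have h1 : HasSum (fun n : ℕ => (n : ℝ) * ε ^ n) (ε / (1 - ε) ^ 2) :=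
    hasSum_coe_mul_geometric_of_norm_lt_one hε
  have h0 : HasSum (fun n : ℕ => ε ^ n) ((1 - ε)⁻¹) := hasSum_geometric_of_norm_lt_one hε
  have key := ((h2.mul_left 2).sub ((h1.mul_left 3).add (h0.mul_left 2)))
  have hfun : (fun n : ℕ => 2 * ((((n + 2).choose 2 : ℕ) : ℝ) * ε ^ n) -
      (3 * ((n : ℝ) * ε ^ n) + 2 * ε ^ n)) = fun n : ℕ => (n : ℝ) ^ 2 * ε ^ n := by
    funext n
    have : (((n + 2).choose 2 : ℕ) : ℝ) = (n + 2) * (n + 1) / 2 := by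
      rw [Nat.cast_choose_two]; push_cast; ring
    rw [this]; ring
  rw [hfun] at key
  have h1ε : (1 - ε) ≠ 0 := by nlinarith
  convert key using 1
  · rfl
  field_simp
  ring

private lemma key_hasSum (hε0 : 0 ≤ ε) (hε1 : ε < 1) (K : ℕ) :
    HasSum (fun i : Fin K → ℕ => ε ^ (∑ h, i h)) ((1 - ε)⁻¹ ^ K) ∧
    HasSum (fun i : Fin K → ℕ => ((∑ h, i h : ℕ) : ℝ) * ε ^ (∑ h, i h))
      ((K : ℝ) * ε * (1 - ε)⁻¹ ^ (K + 1)) ∧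
    HasSum (fun i : Fin K → ℕ => ((∑ h, i h : ℕ) : ℝ) ^ 2 * ε ^ (∑ h, i h))
      ((K : ℝ) * ε * (1 + (K : ℝ) * ε) * (1 - ε)⁻¹ ^ (K + 2)) := by
  have hε : ‖ε‖ < 1 := by rw [Real.norm_eq_abs, abs_of_nonneg hε0]; exact hε1
  have hg0 : HasSum (fun n : ℕ => ε ^ n) ((1 - ε)⁻¹) := hasSum_geometric_of_norm_lt_one hε
  have hg1 : HasSum (fun n : ℕ => (n : ℝ) * ε ^ n) (ε / (1 - ε) ^ 2) :=
    hasSum_coe_mul_geometric_of_norm_lt_one hε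
  have hg2 : HasSum (fun n : ℕ => (n : ℝ) ^ 2 * ε ^ n) (ε * (1 + ε) / (1 - ε) ^ 3) :=
    hs_sq hε0 hε1
  have h1ε : (1 - ε) ≠ 0 := by nlinarith
  induction K with
  | zero =>
    haveI : Fintype (Fin 0 → ℕ) := Fintype.ofSubsingleton (fun i : Fin 0 => i.elim0)
    refine ⟨?_, ?_, ?_⟩ <;>
    · convert hasSum_fintype _ using 1
      · simp
      · exact this
  | succ K ih =>
    obtain ⟨h0, h1, h2⟩ := ih
    set e := Fin.consEquiv (fun _ : Fin (K + 1) => ℕ) with he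
    have hsum : ∀ p : ℕ × (Fin K → ℕ), (∑ h, e p h) = p.1 + ∑ h, p.2 h := by
      intro p
      simp [he, Fin.sum_univ_succ]
    -- summability of products
    have nn0 : ∀ i : Fin K → ℕ, 0 ≤ ε ^ (∑ h, i h) := fun i => pow_nonneg hε0 _
    have nn1 : ∀ i : Fin K → ℕ, 0 ≤ ((∑ h, i h : ℕ) : ℝ) * ε ^ (∑ h, i h) :=
      fun i => mul_nonneg (Nat.cast_nonneg _) (nn0 i)
    have nn2 : ∀ i : Fin K → ℕ, 0 ≤ ((∑ h, i h : ℕ) : ℝ) ^ 2 * ε ^ (∑ h, i h) :=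
      fun i => mul_nonneg (sq_nonneg _) (nn0 i)
    have nng0 : ∀ n : ℕ, (0:ℝ) ≤ ε ^ n := fun n => pow_nonneg hε0 _
    have nng1 : ∀ n : ℕ, (0:ℝ) ≤ (n : ℝ) * ε ^ n := fun n => mul_nonneg (Nat.cast_nonneg _) (nng0 n)
    have nng2 : ∀ n : ℕ, (0:ℝ) ≤ (n : ℝ) ^ 2 * ε ^ n := fun n => mul_nonneg (sq_nonneg _) (nng0 n)
    have S00 := hg0.summable.mul_of_nonneg h0.summable (fun n => nng0 n) (fun i => nn0 i)
    have S10 := hg1.summable.mul_of_nonneg h0.summable (fun n => nng1 n) (fun i => nn0 i)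
    have S01 := hg0.summable.mul_of_nonneg h1.summable (fun n => nng0 n) (fun i => nn1 i)
    have S20 := hg2.summable.mul_of_nonneg h0.summable (fun n => nng2 n) (fun i => nn0 i)
    have S11 := hg1.summable.mul_of_nonneg h1.summable (fun n => nng1 n) (fun i => nn1 i)
    have S02 := hg0.summable.mul_of_nonneg h2.summable (fun n => nng0 n) (fun i => nn2 i)
    have M00 := hg0.mul h0 S00
    have M10 := hg1.mul h0 S10
    have M01 := hg0.mul h1 S01
    have M20 := hg2.mul h0 S20
    have M11 := hg1.mul h1 S11
    have M02 := hg0.mul h2 S02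
    refine ⟨?_, ?_, ?_⟩
    · refine (e.hasSum_iff).mp ?_
      have : (fun p : ℕ × (Fin K → ℕ) => ε ^ (∑ h, e p h)) =
          fun p : ℕ × (Fin K → ℕ) => ε ^ p.1 * ε ^ (∑ h, p.2 h) := by
        funext p; rw [hsum p, pow_add]
      show HasSum (fun p : ℕ × (Fin K → ℕ) => ε ^ (∑ h, e p h)) _
      rw [this, show (1 - ε)⁻¹ ^ (K + 1) = (1 - ε)⁻¹ * (1 - ε)⁻¹ ^ K by ring]
      exact M00
    · refine (e.hasSum_iff).mp ?_
      have : (fun p : ℕ × (Fin K → ℕ) => ((∑ h, e p h : ℕ) : ℝ) * ε ^ (∑ h, e p h)) =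
          fun p : ℕ × (Fin K → ℕ) =>
            ((p.1 : ℝ) * ε ^ p.1) * ε ^ (∑ h, p.2 h) +
            ε ^ p.1 * (((∑ h, p.2 h : ℕ) : ℝ) * ε ^ (∑ h, p.2 h)) := by
        funext p; rw [hsum p]; push_cast; rw [pow_add]; ring
      show HasSum (fun p : ℕ × (Fin K → ℕ) => ((∑ h, e p h : ℕ) : ℝ) * ε ^ (∑ h, e p h)) _
      rw [this]
      have := M10.add M01
      convert this using 1
      · rfl
      push_cast
      simp only [div_eq_mul_inv, ← inv_pow]
      ring
    · refine (e.hasSum_iff).mp ?_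
      have : (fun p : ℕ × (Fin K → ℕ) => ((∑ h, e p h : ℕ) : ℝ) ^ 2 * ε ^ (∑ h, e p h)) =
          fun p : ℕ × (Fin K → ℕ) =>
            (((p.1 : ℝ) ^ 2 * ε ^ p.1) * ε ^ (∑ h, p.2 h) +
             2 * (((p.1 : ℝ) * ε ^ p.1) * (((∑ h, p.2 h : ℕ) : ℝ) * ε ^ (∑ h, p.2 h)))) +
            ε ^ p.1 * (((∑ h, p.2 h : ℕ) : ℝ) ^ 2 * ε ^ (∑ h, p.2 h)) := by
        funext p; rw [hsum p]; push_cast; rw [pow_add]; ring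
      show HasSum (fun p : ℕ × (Fin K → ℕ) => ((∑ h, e p h : ℕ) : ℝ) ^ 2 * ε ^ (∑ h, e p h)) _
      rw [this]
      have := (M20.add (M11.mul_left 2)).add M02
      convert this using 1
      · rfl
      push_cast
      simp only [div_eq_mul_inv, ← inv_pow]
      ring

end aux

/-- Theorem 2 of the paper: with `S̄ = (1-ε)^K ∑_{i∈ℕ^K} (Σi+K) ε^{Σi}` and
`S2 = (1-ε)^K ∑_{i∈ℕ^K} (Σi+K)² ε^{Σi}`, the AoI of the infinite-error-tolerance policy is
`S̄ + S2/(2S̄) = 3K/2 + ε(3K+1)/(2(1-ε))`, which also equals `(K/(1-ε))(3/2 + ε/(2K))`. -/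
theorem stmt4 (K : ℕ) (hK : 0 < K) (ε : ℝ) (hε0 : 0 ≤ ε) (hε1 : ε < 1) :
    ((1 - ε) ^ K * ∑' i : Fin K → ℕ, (((∑ h, i h) + K : ℕ) : ℝ) * ε ^ (∑ h, i h)) +
        ((1 - ε) ^ K * ∑' i : Fin K → ℕ, (((∑ h, i h) + K : ℕ) : ℝ) ^ 2 * ε ^ (∑ h, i h)) /
          (2 * ((1 - ε) ^ K * ∑' i : Fin K → ℕ, (((∑ h, i h) + K : ℕ) : ℝ) * ε ^ (∑ h, i h))) =
      3 * (K : ℝ) / 2 + ε * (3 * (K : ℝ) + 1) / (2 * (1 - ε)) ∧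
    3 * (K : ℝ) / 2 + ε * (3 * (K : ℝ) + 1) / (2 * (1 - ε)) =
      ((K : ℝ) / (1 - ε)) * (3 / 2 + ε / (2 * (K : ℝ))) := by
  obtain ⟨h0, h1, h2⟩ := key_hasSum hε0 hε1 K
  have h1ε : (1 - ε) ≠ 0 := by nlinarith
  have hKR : (K : ℝ) ≠ 0 := Nat.cast_ne_zero.mpr hK.ne'
  -- first moment sum
  have hS1 : HasSum (fun i : Fin K → ℕ => (((∑ h, i h) + K : ℕ) : ℝ) * ε ^ (∑ h, i h))
      ((K : ℝ) * ε * (1 - ε)⁻¹ ^ (K + 1) + (K : ℝ) * (1 - ε)⁻¹ ^ K) := by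
    have := h1.add (h0.mul_left (K : ℝ))
    convert this using 1
    funext i; push_cast; ring
  have hS2 : HasSum (fun i : Fin K → ℕ => (((∑ h, i h) + K : ℕ) : ℝ) ^ 2 * ε ^ (∑ h, i h))
      ((K : ℝ) * ε * (1 + (K : ℝ) * ε) * (1 - ε)⁻¹ ^ (K + 2) +
       (2 * (K : ℝ) * ((K : ℝ) * ε * (1 - ε)⁻¹ ^ (K + 1)) + (K : ℝ) ^ 2 * (1 - ε)⁻¹ ^ K)) := by
    have := h2.add ((h1.mul_left (2 * (K : ℝ))).add (h0.mul_left ((K : ℝ) ^ 2)))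
    convert this using 1
    funext i; push_cast; ring
  rw [hS1.tsum_eq, hS2.tsum_eq]
  have hpow : (1 - ε) ^ K * (1 - ε)⁻¹ ^ K = 1 := by
    rw [← mul_pow, mul_inv_cancel₀ h1ε, one_pow]
  have hA : (1 - ε) ^ K * ((K : ℝ) * ε * (1 - ε)⁻¹ ^ (K + 1) + (K : ℝ) * (1 - ε)⁻¹ ^ K) =
      (K : ℝ) / (1 - ε) := by
    rw [pow_succ]
    field_simp
    rw [one_div, hpow]; ring
  have hB : (1 - ε) ^ K * ((K : ℝ) * ε * (1 + (K : ℝ) * ε) * (1 - ε)⁻¹ ^ (K + 2) +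
      (2 * (K : ℝ) * ((K : ℝ) * ε * (1 - ε)⁻¹ ^ (K + 1)) + (K : ℝ) ^ 2 * (1 - ε)⁻¹ ^ K)) =
      ((K : ℝ) * ε + (K : ℝ) ^ 2) / (1 - ε) ^ 2 := by
    rw [show K + 2 = (K + 1) + 1 by ring, pow_succ, pow_succ]
    field_simp
    rw [one_div, hpow]; ring
  rw [hA, hB]
  constructor
  · rw [div_add_div _ _ (by norm_num : (2:ℝ) ≠ 0) (by positivity : 2 * (1 - ε) ≠ 0)] at *
    field_simp
    ring
  · field_simp
    ring
end

section
/- Fix a positive integer K and a policy c = (c_1,…,c_K) of positive integers. For ε ∈ (0,1), write Δ_ε(c) for the average age of information of policy c at erasure probability ε. Let B = { j ∈ {1,…,K} : c_j = 1 } and l = K − |B|. Then lim_{ε→0⁺} (Δ_ε(c) − 3K/2)/ε = l + (1/(2K)) · ( ∑_{j∈B} j² + (K+1)·l + K·∑_{j∈B} j ). -/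
open Finset

noncomputable section

/-- Success probability `p(c) = ∏_{j=1}^K (1 - ε^{c_j})`; the policy `c` is 1-indexed,
i.e. its relevant coordinates are `c 1, …, c K`. -/
def succProb (ε : ℝ) (K : ℕ) (c : ℕ → ℕ) : ℝ :=
  ∏ j ∈ Finset.Icc 1 K, (1 - ε ^ c j)

/-- `S̄(c)`: expected duration of a successful update transmission.  The sum ranges over
vectors `(i_1, …, i_K)` with `0 ≤ i_j ≤ c_j - 1`, encoded as `i : (h : Fin K) → Fin (c (h+1))`. -/
def Sbar (ε : ℝ) (K : ℕ) (c : ℕ → ℕ) : ℝ :=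
  ((1 - ε) ^ K / succProb ε K c) *
    ∑ i : (h : Fin K) → Fin (c (h.1 + 1)),
      (((∑ h, (i h).1) + K : ℕ) : ℝ) * ε ^ (∑ h, (i h).1)

/-- `S2(c)`: second moment of the duration of a successful update transmission. -/
def S2 (ε : ℝ) (K : ℕ) (c : ℕ → ℕ) : ℝ :=
  ((1 - ε) ^ K / succProb ε K c) *
    ∑ i : (h : Fin K) → Fin (c (h.1 + 1)),
      (((∑ h, (i h).1) + K : ℕ) : ℝ) ^ 2 * ε ^ (∑ h, (i h).1)

/-- `D̄(c)`: expected total duration of the failed update transmissions between two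
successful ones.  The outer sum is over the packet index `j ∈ {1, …, K}` at which the
update is dropped, the inner sum over the erasure counts `(i_1, …, i_{j-1})`,
`0 ≤ i_h ≤ c_h - 1`. -/
def Dbar (ε : ℝ) (K : ℕ) (c : ℕ → ℕ) : ℝ :=
  (1 / succProb ε K c) *
    ∑ j ∈ Finset.Icc 1 K, ∑ i : (h : Fin (j - 1)) → Fin (c (h.1 + 1)),
      (1 - ε) ^ (j - 1) * ε ^ (c j + ∑ h, (i h).1) *
        (((j - 1) + c j + ∑ h, (i h).1 : ℕ) : ℝ)

/-- `D2(c)`: second moment of the total duration of failed update transmissions. -/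
def D2 (ε : ℝ) (K : ℕ) (c : ℕ → ℕ) : ℝ :=
  (1 / succProb ε K c) *
    ∑ j ∈ Finset.Icc 1 K, ∑ i : (h : Fin (j - 1)) → Fin (c (h.1 + 1)),
      (1 - ε) ^ (j - 1) * ε ^ (c j + ∑ h, (i h).1) *
        (((j - 1) + c j + ∑ h, (i h).1 : ℕ) : ℝ) ^ 2
  + 2 * Dbar ε K c ^ 2

/-- Average age of information of policy `c`. -/
def AoI (ε : ℝ) (K : ℕ) (c : ℕ → ℕ) : ℝ :=
  Sbar ε K c +
    (S2 ε K c / 2 + D2 ε K c / 2 + Sbar ε K c * Dbar ε K c) /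
      (Sbar ε K c + Dbar ε K c)

/-- Average peak age of information of policy `c`. -/
def PAoI (ε : ℝ) (K : ℕ) (c : ℕ → ℕ) : ℝ :=
  2 * Sbar ε K c + Dbar ε K c


/-- derivative of `a * ε^n` at `0`. -/
private lemma aux_mono (a : ℝ) (n : ℕ) :
    HasDerivAt (fun ε : ℝ => a * ε ^ n) (if n = 1 then a else 0) 0 := by
  have h := (hasDerivAt_pow n (0:ℝ)).const_mul a
  refine h.congr_deriv (Eq.symm ?_)
  match n with
  | 0 => simp
  | 1 => simp
  | (m+2) => simp [zero_pow]

private lemma aux_one_sub_pow (m : ℕ) :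
    HasDerivAt (fun ε : ℝ => (1 - ε) ^ m) (-(m:ℝ)) 0 := by
  have h1 : HasDerivAt (fun ε : ℝ => 1 - ε) (-1 : ℝ) 0 := by
    simpa using (hasDerivAt_id (0:ℝ)).const_sub 1
  have h := (hasDerivAt_pow m ((1:ℝ) - 0)).comp 0 h1
  exact h.congr_deriv (by simp)

private lemma aux_mono2 (a : ℝ) (m n : ℕ) (hn : 0 < n) :
    HasDerivAt (fun ε : ℝ => (1 - ε) ^ m * ε ^ n * a) (if n = 1 then a else 0) 0 := by
  have h := ((aux_one_sub_pow m).mul (hasDerivAt_pow n (0:ℝ))).mul_const a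
  refine h.congr_deriv (Eq.symm ?_)
  match n, hn with
  | 1, _ => norm_num
  | (k+2), _ => simp [zero_pow]

private lemma aux_sum_zero {n : ℕ} (d : Fin n → ℕ) (hd : ∀ h, 0 < d h) (a : ℝ) :
    (∑ i : (h : Fin n) → Fin (d h), if (∑ h, (i h).1) = 0 then a else 0) = a := by
  classical
  rw [Finset.sum_eq_single (fun h => (⟨0, hd h⟩ : Fin (d h)))]
  · simp
  · intro b _ hb
    rw [if_neg]
    intro hs
    exact hb (funext fun h => Fin.ext (by
      simpa using (Finset.sum_eq_zero_iff).1 hs h (Finset.mem_univ h)))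
  · intro habs; exact absurd (Finset.mem_univ _) habs

private def auxDelta {n : ℕ} (d : Fin n → ℕ) (hd : ∀ h, 0 < d h) (h₀ : Fin n)
    (hh₀ : 1 < d h₀) : (h : Fin n) → Fin (d h) :=
  fun h => if hh : h = h₀ then ⟨1, by rw [hh]; exact hh₀⟩ else ⟨0, hd h⟩

private lemma auxDelta_val {n : ℕ} (d : Fin n → ℕ) (hd : ∀ h, 0 < d h) (h₀ : Fin n)
    (hh₀ : 1 < d h₀) (h : Fin n) :
    ((auxDelta d hd h₀ hh₀ h) : ℕ) = if h = h₀ then 1 else 0 := by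
  unfold auxDelta; split <;> rfl

private lemma auxDelta_sum {n : ℕ} (d : Fin n → ℕ) (hd : ∀ h, 0 < d h) (h₀ : Fin n)
    (hh₀ : 1 < d h₀) : (∑ h, ((auxDelta d hd h₀ hh₀ h) : ℕ)) = 1 := by
  simp only [auxDelta_val]
  rw [Finset.sum_ite_eq' Finset.univ h₀ (fun _ => 1)]
  simp

private lemma aux_card_one {n : ℕ} (d : Fin n → ℕ) (hd : ∀ h, 0 < d h) :
    (Finset.univ.filter (fun i : (h : Fin n) → Fin (d h) => (∑ h, (i h).1) = 1)).card
      = (Finset.univ.filter (fun h : Fin n => 1 < d h)).card := by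
  classical
  symm
  refine Finset.card_bij
    (fun h₀ ha => auxDelta d hd h₀ (by simpa using (Finset.mem_filter.1 ha).2)) ?_ ?_ ?_
  · intro h₀ ha
    exact Finset.mem_filter.2 ⟨Finset.mem_univ _, auxDelta_sum d hd h₀ _⟩
  · intro a₁ ha₁ a₂ ha₂ heq
    have h1 := congrArg (fun f => (f a₁ : ℕ)) heq
    by_contra hne
    simp only [auxDelta_val, if_pos rfl, if_neg hne] at h1
    exact one_ne_zero h1
  · intro b hb
    have hs : (∑ h, (b h).1) = 1 := (Finset.mem_filter.1 hb).2
    have hex : ∃ h₀ : Fin n, (b h₀).1 ≠ 0 := by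
      by_contra hco
      push_neg at hco
      rw [Finset.sum_eq_zero (fun h _ => hco h)] at hs
      exact one_ne_zero hs.symm
    obtain ⟨h₀, hh₀⟩ := hex
    have hle : (b h₀).1 ≤ 1 :=
      hs ▸ Finset.single_le_sum (f := fun h => (b h).1) (fun h _ => Nat.zero_le _)
        (Finset.mem_univ h₀)
    have hb1 : (b h₀).1 = 1 := le_antisymm hle (Nat.one_le_iff_ne_zero.2 hh₀)
    have hrest : ∀ h, h ≠ h₀ → (b h).1 = 0 := by
      intro h hne
      have h2 : (∑ h ∈ Finset.univ.erase h₀, (b h).1) = 0 := by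
        have h3 : (∑ h ∈ Finset.univ.erase h₀, (b h).1) + (b h₀).1 = ∑ h, (b h).1 :=
          Finset.sum_erase_add _ _ (Finset.mem_univ h₀)
        omega
      exact Finset.sum_eq_zero_iff.1 h2 h (Finset.mem_erase.2 ⟨hne, Finset.mem_univ h⟩)
    have hd0 : 1 < d h₀ := by have := (b h₀).2; omega
    refine ⟨h₀, Finset.mem_filter.2 ⟨Finset.mem_univ _, hd0⟩, ?_⟩
    funext h
    apply Fin.ext
    rw [auxDelta_val]
    split
    · next hh => rw [hh]; exact hb1.symm
    · next hh => exact (hrest h hh).symm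

private lemma aux_sum_one {n : ℕ} (d : Fin n → ℕ) (hd : ∀ h, 0 < d h) (w : ℕ → ℝ) :
    (∑ i : (h : Fin n) → Fin (d h), if (∑ h, (i h).1) = 1 then w (∑ h, (i h).1) else 0)
      = ((Finset.univ.filter (fun h : Fin n => 1 < d h)).card : ℝ) * w 1 := by
  classical
  have hcongr : ∀ i : (h : Fin n) → Fin (d h),
      (if (∑ h, (i h).1) = 1 then w (∑ h, (i h).1) else 0)
        = if (∑ h, (i h).1) = 1 then w 1 else 0 := by
    intro i
    split
    · next hs => rw [hs]
    · rfl
  rw [Finset.sum_congr rfl (fun i _ => hcongr i), Finset.sum_ite, Finset.sum_const,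
    Finset.sum_const_zero, add_zero, aux_card_one d hd, nsmul_eq_mul]

private lemma aux_sum_zero_w {n : ℕ} (d : Fin n → ℕ) (hd : ∀ h, 0 < d h) (w : ℕ → ℝ) :
    (∑ i : (h : Fin n) → Fin (d h), w (∑ h, (i h).1) * (0:ℝ) ^ (∑ h, (i h).1)) = w 0 := by
  have hcongr : ∀ i : (h : Fin n) → Fin (d h),
      w (∑ h, (i h).1) * (0:ℝ) ^ (∑ h, (i h).1)
        = if (∑ h, (i h).1) = 0 then w 0 else 0 := by
    intro i
    by_cases h0 : (∑ h, (i h).1) = 0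
    · rw [if_pos h0, h0]; simp
    · rw [if_neg h0, zero_pow h0, mul_zero]
  rw [Finset.sum_congr rfl (fun i _ => hcongr i), aux_sum_zero d hd (w 0)]

private lemma aux_card_convert (K : ℕ) (c : ℕ → ℕ) (hc : ∀ j ∈ Finset.Icc 1 K, 0 < c j) :
    ((Finset.univ.filter (fun h : Fin K => 1 < c (h.1 + 1))).card : ℝ)
      = (K : ℝ) - ((Finset.Icc 1 K).filter (fun j => c j = 1)).card := by
  classical
  have h1 : (Finset.univ.filter (fun h : Fin K => 1 < c (h.1 + 1))).card
      = ((Finset.Icc 1 K).filter (fun j => 1 < c j)).card := by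
    apply Finset.card_nbij (fun h => h.1 + 1)
    · intro a ha
      have h2 := a.2
      simp only [Finset.coe_filter, Finset.mem_filter, Finset.mem_univ, true_and, Set.mem_setOf_eq] at ha
      exact Finset.mem_filter.2 ⟨Finset.mem_Icc.2 ⟨by beta_reduce; omega, by beta_reduce; omega⟩, ha⟩
    · intro a _ b _ hab
      have hab' : a.1 + 1 = b.1 + 1 := hab
      exact Fin.ext (by omega)
    · intro j hj
      simp only [Finset.coe_filter, Finset.mem_Icc, Set.mem_setOf_eq] at hj
      obtain ⟨⟨hj1, hj2⟩, hj3⟩ := hj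
      refine ⟨⟨j - 1, by omega⟩, ?_, by show j - 1 + 1 = j; omega⟩
      have hji : j - 1 + 1 = j := by omega
      simp only [Finset.coe_filter, Finset.mem_univ, Set.mem_setOf_eq, true_and, hji]
      exact hj3
  have h4 : ∀ j ∈ Finset.Icc 1 K, (¬ 1 < c j) ↔ c j = 1 := by
    intro j hj
    have := hc j hj
    omega
  have h2 : ((Finset.Icc 1 K).filter (fun j => 1 < c j)).card
      + ((Finset.Icc 1 K).filter (fun j => c j = 1)).card = K := by
    have h3 := Finset.card_filter_add_card_filter_not
      (s := Finset.Icc 1 K) (p := fun j => 1 < c j)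
    rw [Finset.filter_congr h4] at h3
    rw [h3, Nat.card_Icc]
    omega
  rw [h1]
  have h5 : (((Finset.Icc 1 K).filter (fun j => 1 < c j)).card : ℝ)
      + (((Finset.Icc 1 K).filter (fun j => c j = 1)).card : ℝ) = K := by
    exact_mod_cast h2
  linarith

private lemma succProb_zero (K : ℕ) (c : ℕ → ℕ) (hc : ∀ j ∈ Finset.Icc 1 K, 0 < c j) :
    succProb 0 K c = 1 := by
  unfold succProb
  apply Finset.prod_eq_one
  intro j hj
  rw [zero_pow (hc j hj).ne', sub_zero]

private lemma succProb_hasDeriv (K : ℕ) (c : ℕ → ℕ) (hc : ∀ j ∈ Finset.Icc 1 K, 0 < c j) :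
    HasDerivAt (fun ε : ℝ => succProb ε K c)
      (-(((Finset.Icc 1 K).filter (fun j => c j = 1)).card : ℝ)) 0 := by
  classical
  have hterm : ∀ n : ℕ, HasDerivAt (fun ε : ℝ => 1 - ε ^ n)
      (if n = 1 then (-1:ℝ) else 0) 0 := by
    intro n
    have h := (hasDerivAt_pow n (0:ℝ)).const_sub 1
    refine h.congr_deriv (Eq.symm ?_)
    match n with
    | 0 => simp
    | 1 => simp
    | (m+2) => simp [zero_pow]
  have h := HasDerivAt.fun_finsetProd (u := Finset.Icc 1 K) (f := fun j ε => 1 - ε ^ c j)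
    (f' := fun j => if c j = 1 then (-1:ℝ) else 0) (x := 0) (fun j _ => hterm (c j))
  have hfun : HasDerivAt (fun ε : ℝ => succProb ε K c)
      (∑ j ∈ Finset.Icc 1 K, (∏ j' ∈ (Finset.Icc 1 K).erase j, (1 - (0:ℝ) ^ c j')) •
        (if c j = 1 then (-1:ℝ) else 0)) 0 := h
  convert hfun using 1
  have hprod : ∀ j ∈ Finset.Icc 1 K,
      (∏ j' ∈ (Finset.Icc 1 K).erase j, (1 - (0:ℝ) ^ c j')) = 1 := by
    intro j _
    apply Finset.prod_eq_one
    intro j' hj'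
    rw [zero_pow (hc j' (Finset.mem_of_mem_erase hj')).ne', sub_zero]
  rw [Finset.sum_congr rfl (fun j hj => by rw [hprod j hj, one_smul])]
  rw [Finset.sum_ite, Finset.sum_const, Finset.sum_const_zero, add_zero, nsmul_eq_mul]
  ring

private lemma aux_hd (K : ℕ) (c : ℕ → ℕ) (hc : ∀ j ∈ Finset.Icc 1 K, 0 < c j) :
    ∀ h : Fin K, 0 < c (h.1 + 1) := fun h =>
  hc _ (Finset.mem_Icc.2 ⟨Nat.le_add_left 1 h.1, by have := h.2; omega⟩)

private lemma numS_hasDeriv (K : ℕ) (c : ℕ → ℕ) (hc : ∀ j ∈ Finset.Icc 1 K, 0 < c j)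
    (w : ℕ → ℝ) :
    HasDerivAt (fun ε : ℝ => ∑ i : (h : Fin K) → Fin (c (h.1 + 1)),
        w (∑ h, (i h).1) * ε ^ (∑ h, (i h).1))
      (((K : ℝ) - ((Finset.Icc 1 K).filter (fun j => c j = 1)).card) * w 1) 0 := by
  classical
  have hd := aux_hd K c hc
  have h := HasDerivAt.fun_sum (u := (Finset.univ : Finset ((h : Fin K) → Fin (c (h.1 + 1)))))
    (x := 0)
    (A := fun i ε => w (∑ h, (i h).1) * ε ^ (∑ h, (i h).1))
    (A' := fun i => if (∑ h, (i h).1) = 1 then w (∑ h, (i h).1) else 0)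
    (fun i _ => aux_mono (w (∑ h, (i h).1)) (∑ h, (i h).1))
  refine h.congr_deriv (Eq.symm ?_)
  rw [aux_sum_one _ hd w, aux_card_convert K c hc]

private lemma numD_hasDeriv (K : ℕ) (c : ℕ → ℕ) (hc : ∀ j ∈ Finset.Icc 1 K, 0 < c j)
    (W : ℕ → ℕ → ℝ) :
    HasDerivAt (fun ε : ℝ => ∑ j ∈ Finset.Icc 1 K,
        ∑ i : (h : Fin (j - 1)) → Fin (c (h.1 + 1)),
          (1 - ε) ^ (j - 1) * ε ^ (c j + ∑ h, (i h).1) * W j (∑ h, (i h).1))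
      (∑ j ∈ (Finset.Icc 1 K).filter (fun j => c j = 1), W j 0) 0 := by
  classical
  have hd : ∀ j ∈ Finset.Icc 1 K, ∀ h : Fin (j - 1), 0 < c (h.1 + 1) := by
    intro j hj h
    have hj' := Finset.mem_Icc.1 hj
    have hh := h.2
    exact hc _ (Finset.mem_Icc.2 ⟨by omega, by omega⟩)
  have h := HasDerivAt.fun_sum (u := Finset.Icc 1 K) (x := 0)
    (A := fun j ε => ∑ i : (h : Fin (j - 1)) → Fin (c (h.1 + 1)),
      (1 - ε) ^ (j - 1) * ε ^ (c j + ∑ h, (i h).1) * W j (∑ h, (i h).1))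
    (A' := fun j => ∑ i : (h : Fin (j - 1)) → Fin (c (h.1 + 1)),
      if (c j + ∑ h, (i h).1) = 1 then W j (∑ h, (i h).1) else 0)
    (fun j hj => HasDerivAt.fun_sum (fun i _ =>
      aux_mono2 (W j (∑ h, (i h).1)) (j - 1) (c j + ∑ h, (i h).1)
        (by have := hc j hj; omega)))
  refine h.congr_deriv (Eq.symm ?_)
  have hinner : ∀ j ∈ Finset.Icc 1 K,
      (∑ i : (h : Fin (j - 1)) → Fin (c (h.1 + 1)),
        if (c j + ∑ h, (i h).1) = 1 then W j (∑ h, (i h).1) else 0)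
      = if c j = 1 then W j 0 else 0 := by
    intro j hj
    by_cases hcj : c j = 1
    · rw [if_pos hcj]
      have hco : ∀ i : (h : Fin (j - 1)) → Fin (c (h.1 + 1)),
          (if (c j + ∑ h, (i h).1) = 1 then W j (∑ h, (i h).1) else 0)
            = if (∑ h, (i h).1) = 0 then W j 0 else 0 := by
        intro i
        by_cases h0 : (∑ h, (i h).1) = 0
        · rw [if_pos (by omega), if_pos h0, h0]
        · rw [if_neg (by omega), if_neg h0]
      rw [Finset.sum_congr rfl (fun i _ => hco i), aux_sum_zero _ (hd j hj) (W j 0)]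
    · rw [if_neg hcj]
      apply Finset.sum_eq_zero
      intro i _
      rw [if_neg]
      have := hc j hj
      omega
  rw [Finset.sum_congr rfl hinner, ← Finset.sum_filter]

private lemma numD_zero (K : ℕ) (c : ℕ → ℕ) (hc : ∀ j ∈ Finset.Icc 1 K, 0 < c j)
    (W : ℕ → ℕ → ℝ) :
    (∑ j ∈ Finset.Icc 1 K, ∑ i : (h : Fin (j - 1)) → Fin (c (h.1 + 1)),
        (1 - (0:ℝ)) ^ (j - 1) * (0:ℝ) ^ (c j + ∑ h, (i h).1) * W j (∑ h, (i h).1)) = 0 :=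
  Finset.sum_eq_zero fun j hj => Finset.sum_eq_zero fun i _ => by
    rw [zero_pow (by have := hc j hj; omega : (c j + ∑ h, (i h).1) ≠ 0)]
    ring

/-- Equation (16) of the paper: the first-order expansion of the average AoI of a policy
`c` as `ε → 0⁺`.  Here `B = {j ∈ {1,…,K} : c_j = 1}` and `l = K - |B|`. -/
theorem stmt5 (K : ℕ) (hK : 0 < K) (c : ℕ → ℕ) (hc : ∀ j ∈ Finset.Icc 1 K, 0 < c j) :
    Filter.Tendsto (fun ε : ℝ => (AoI ε K c - 3 * (K : ℝ) / 2) / ε)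
      (nhdsWithin 0 (Set.Ioi 0))
      (nhds
        (((K : ℝ) - ((Finset.Icc 1 K).filter (fun j => c j = 1)).card) +
          (1 / (2 * (K : ℝ))) *
            ((∑ j ∈ (Finset.Icc 1 K).filter (fun j => c j = 1), (j : ℝ) ^ 2) +
              ((K : ℝ) + 1) *
                ((K : ℝ) - ((Finset.Icc 1 K).filter (fun j => c j = 1)).card) +
              (K : ℝ) * ∑ j ∈ (Finset.Icc 1 K).filter (fun j => c j = 1), (j : ℝ)))) := by
  classical
  have hd := aux_hd K c hc
  have hK' : ((K : ℝ)) ≠ 0 := Nat.cast_ne_zero.2 hK.ne'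
  have hp0 : succProb 0 K c = 1 := succProb_zero K c hc
  have hp := succProb_hasDeriv K c hc
  have hpne : succProb 0 K c ≠ 0 := by rw [hp0]; norm_num
  -- prefactor (1-ε)^K / p
  have hpre : HasDerivAt (fun ε : ℝ => (1 - ε) ^ K / succProb ε K c)
      ((((Finset.Icc 1 K).filter (fun j => c j = 1)).card : ℝ) - K) 0 := by
    have h := (aux_one_sub_pow K).div hp hpne
    refine h.congr_deriv (Eq.symm ?_)
    simp only [hp0]
    norm_num
    ring
  -- values of the numerators at 0
  have hNumS0 : (∑ i : (h : Fin K) → Fin (c (h.1 + 1)),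
      ((((∑ h, (i h).1) + K : ℕ)) : ℝ) * (0:ℝ) ^ (∑ h, (i h).1)) = ((0 + K : ℕ) : ℝ) :=
    aux_sum_zero_w _ hd (fun n => ((n + K : ℕ) : ℝ))
  have hNumS20 : (∑ i : (h : Fin K) → Fin (c (h.1 + 1)),
      ((((∑ h, (i h).1) + K : ℕ)) : ℝ) ^ 2 * (0:ℝ) ^ (∑ h, (i h).1)) = ((0 + K : ℕ) : ℝ) ^ 2 :=
    aux_sum_zero_w _ hd (fun n => ((n + K : ℕ) : ℝ) ^ 2)
  have hNumD0 : (∑ j ∈ Finset.Icc 1 K, ∑ i : (h : Fin (j - 1)) → Fin (c (h.1 + 1)),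
      (1 - (0:ℝ)) ^ (j - 1) * (0:ℝ) ^ (c j + ∑ h, (i h).1) *
        (((j - 1) + c j + ∑ h, (i h).1 : ℕ) : ℝ)) = 0 :=
    numD_zero K c hc (fun j n => (((j - 1) + c j + n : ℕ) : ℝ))
  have hNumD20 : (∑ j ∈ Finset.Icc 1 K, ∑ i : (h : Fin (j - 1)) → Fin (c (h.1 + 1)),
      (1 - (0:ℝ)) ^ (j - 1) * (0:ℝ) ^ (c j + ∑ h, (i h).1) *
        (((j - 1) + c j + ∑ h, (i h).1 : ℕ) : ℝ) ^ 2) = 0 :=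
    numD_zero K c hc (fun j n => (((j - 1) + c j + n : ℕ) : ℝ) ^ 2)
  -- Sbar
  have hS0 : Sbar 0 K c = K := by
    unfold Sbar
    rw [hp0, hNumS0]
    norm_num
  have hSbar : HasDerivAt (fun ε : ℝ => Sbar ε K c)
      ((K : ℝ) - (((Finset.Icc 1 K).filter (fun j => c j = 1)).card : ℝ)) 0 := by
    have h : HasDerivAt (fun ε : ℝ => Sbar ε K c) _ 0 :=
      hpre.mul (numS_hasDeriv K c hc (fun n => ((n + K : ℕ) : ℝ)))
    convert h using 1
    simp only [hNumS0, hp0]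
    push_cast
    norm_num
    ring
  -- S2
  have hS20 : S2 0 K c = (K : ℝ) ^ 2 := by
    unfold S2
    rw [hp0, hNumS20]
    norm_num
  have hS2 : HasDerivAt (fun ε : ℝ => S2 ε K c)
      (((K : ℝ) - (((Finset.Icc 1 K).filter (fun j => c j = 1)).card : ℝ)) * (2 * K + 1)) 0 := by
    have h : HasDerivAt (fun ε : ℝ => S2 ε K c) _ 0 :=
      hpre.mul (numS_hasDeriv K c hc (fun n => ((n + K : ℕ) : ℝ) ^ 2))
    convert h using 1
    simp only [hNumS20, hp0]
    push_cast
    norm_num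
    ring
  -- 1/p
  have h1p : HasDerivAt (fun ε : ℝ => 1 / succProb ε K c)
      ((((Finset.Icc 1 K).filter (fun j => c j = 1)).card : ℝ)) 0 := by
    have h := (hasDerivAt_const (0:ℝ) (1:ℝ)).div hp hpne
    refine h.congr_deriv (Eq.symm ?_)
    simp only [hp0]
    norm_num
  -- Dbar
  have hDbar0 : Dbar 0 K c = 0 := by
    unfold Dbar
    rw [hNumD0, mul_zero]
  have hDbar : HasDerivAt (fun ε : ℝ => Dbar ε K c)
      (∑ j ∈ (Finset.Icc 1 K).filter (fun j => c j = 1), (j : ℝ)) 0 := by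
    have h : HasDerivAt (fun ε : ℝ => Dbar ε K c) _ 0 :=
      h1p.mul (numD_hasDeriv K c hc (fun j n => (((j - 1) + c j + n : ℕ) : ℝ)))
    convert h using 1
    simp only [hNumD0, hp0]
    norm_num
    apply Finset.sum_congr rfl
    intro j hj
    simp only [Finset.mem_filter, Finset.mem_Icc] at hj
    have h2 : j - 1 + c j + 0 = j := by omega
    exact_mod_cast h2.symm
  -- D2
  have hD20 : D2 0 K c = 0 := by
    unfold D2
    rw [hNumD20, mul_zero, hDbar0]
    norm_num
  have hD2 : HasDerivAt (fun ε : ℝ => D2 ε K c)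
      (∑ j ∈ (Finset.Icc 1 K).filter (fun j => c j = 1), (j : ℝ) ^ 2) 0 := by
    have h : HasDerivAt (fun ε : ℝ => D2 ε K c) _ 0 :=
      (h1p.mul (numD_hasDeriv K c hc (fun j n => (((j - 1) + c j + n : ℕ) : ℝ) ^ 2))).add
        ((hDbar.pow 2).const_mul 2)
    convert h using 1
    simp only [hNumD20, hp0, hDbar0]
    norm_num
    apply Finset.sum_congr rfl
    intro j hj
    simp only [Finset.mem_filter, Finset.mem_Icc] at hj
    have h3 : ((j : ℝ)) = ((j - 1 : ℕ) : ℝ) + ((c j) : ℝ) := by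
      have h2 : j = (j - 1) + c j := by omega
      exact_mod_cast h2
    rw [h3]
  -- assemble AoI
  have hdenne : Sbar 0 K c + Dbar 0 K c ≠ 0 := by
    rw [hS0, hDbar0, add_zero]
    exact hK'
  have hA : HasDerivAt (fun ε : ℝ => AoI ε K c)
      (((K : ℝ) - ((Finset.Icc 1 K).filter (fun j => c j = 1)).card) +
        (1 / (2 * (K : ℝ))) *
          ((∑ j ∈ (Finset.Icc 1 K).filter (fun j => c j = 1), (j : ℝ) ^ 2) +
            ((K : ℝ) + 1) *
              ((K : ℝ) - ((Finset.Icc 1 K).filter (fun j => c j = 1)).card) +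
            (K : ℝ) * ∑ j ∈ (Finset.Icc 1 K).filter (fun j => c j = 1), (j : ℝ))) 0 := by
    have hN := ((hS2.div_const 2).add (hD2.div_const 2)).add (hSbar.mul hDbar)
    have hden := hSbar.add hDbar
    have h : HasDerivAt (fun ε : ℝ => AoI ε K c) _ 0 := hSbar.add (hN.div hden hdenne)
    convert h using 1
    simp only [Pi.add_apply, Pi.mul_apply, hS0, hS20, hDbar0, hD20]
    field_simp
    ring
  have hA0 : AoI 0 K c = 3 * (K : ℝ) / 2 := by
    unfold AoI
    rw [hS0, hS20, hDbar0, hD20]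
    rw [add_zero, mul_zero, add_zero]
    norm_num
    field_simp
    ring
  rw [hasDerivAt_iff_tendsto_slope] at hA
  have hsub : nhdsWithin (0:ℝ) (Set.Ioi 0) ≤ nhdsWithin 0 {(0:ℝ)}ᶜ :=
    nhdsWithin_mono 0 (fun x hx => by
      simp only [Set.mem_compl_iff, Set.mem_singleton_iff]
      exact ne_of_gt hx)
  exact (hA.mono_left hsub).congr (fun ε => by
    rw [slope_def_field, hA0, sub_zero])
end
end

section
/- Let K ≥ 3 be an integer. For a subset B ⊆ {1,…,K}, define the rational number G(B) = (K − |B|) + (1/(2K)) · ( ∑_{j∈B} j² + (K+1)·(K − |B|) + K·∑_{j∈B} j ). Then the minimum of G(B) over all subsets B ⊆ {1,…,K} equals (3K² − 2K + 3)/(2K), and this minimum is attained at B = {1,2}. -/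
open Finset

lemma key_ineq (K : ℕ) (hK : 3 ≤ K) (B : Finset ℕ) (hB : B ⊆ Finset.Icc 1 K) :
    3 - 3 * (K : ℚ) ≤
      ∑ j ∈ B, ((j : ℚ) ^ 2 + (K : ℚ) * j - (3 * (K : ℚ) + 1)) := by
  set h : ℕ → ℚ := fun j => (j : ℚ) ^ 2 + (K : ℚ) * j - (3 * (K : ℚ) + 1) with hh
  have hKQ : (3 : ℚ) ≤ (K : ℚ) := by exact_mod_cast hK
  have step1 : ∑ j ∈ B.filter (· ≤ 2), h j ≤ ∑ j ∈ B, h j := by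
    apply Finset.sum_le_sum_of_subset_of_nonneg (Finset.filter_subset _ _)
    intro i hi hni
    have h3 : 3 ≤ i := by
      simp only [Finset.mem_filter, hi, true_and] at hni; omega
    have : (3 : ℚ) ≤ (i : ℚ) := by exact_mod_cast h3
    have h2 : (9 : ℚ) ≤ (i : ℚ) ^ 2 := by nlinarith
    have h4 : (K : ℚ) * 3 ≤ (K : ℚ) * i := by nlinarith
    simp only [hh]; nlinarith
  have hsub : B.filter (· ≤ 2) ⊆ ({1, 2} : Finset ℕ) := by
    intro i hi
    simp only [Finset.mem_filter] at hi
    have := hB hi.1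
    simp only [Finset.mem_Icc] at this
    simp only [Finset.mem_insert, Finset.mem_singleton]
    omega
  have step2 : ∑ j ∈ ({1, 2} : Finset ℕ), h j ≤ ∑ j ∈ B.filter (· ≤ 2), h j := by
    have := Finset.sum_le_sum_of_subset_of_nonneg (f := fun j => -h j) hsub ?_
    · simpa using this
    · intro i hi _
      simp only [Finset.mem_insert, Finset.mem_singleton] at hi
      rcases hi with rfl | rfl <;> simp [hh] <;> nlinarith
  have hval : ∑ j ∈ ({1, 2} : Finset ℕ), h j = 3 - 3 * (K : ℚ) := by
    simp [hh]; ring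
  linarith

/-- The combinatorial optimization at the heart of Theorem 3: for `K ≥ 3`, the minimum
over subsets `B ⊆ {1,…,K}` of
`G(B) = (K - |B|) + (1/(2K)) (∑_{j∈B} j² + (K+1)(K-|B|) + K ∑_{j∈B} j)`
equals `(3K² - 2K + 3)/(2K)`, attained at `B = {1,2}`. -/
theorem stmt6 (K : ℕ) (hK : 3 ≤ K) :
    (∀ B ⊆ Finset.Icc 1 K,
        (3 * (K : ℚ) ^ 2 - 2 * (K : ℚ) + 3) / (2 * (K : ℚ)) ≤
          ((K : ℚ) - B.card) +
            (1 / (2 * (K : ℚ))) *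
              ((∑ j ∈ B, (j : ℚ) ^ 2) + ((K : ℚ) + 1) * ((K : ℚ) - B.card) +
                (K : ℚ) * ∑ j ∈ B, (j : ℚ))) ∧
    ((K : ℚ) - (({1, 2} : Finset ℕ)).card) +
        (1 / (2 * (K : ℚ))) *
          ((∑ j ∈ ({1, 2} : Finset ℕ), (j : ℚ) ^ 2) +
            ((K : ℚ) + 1) * ((K : ℚ) - (({1, 2} : Finset ℕ)).card) +
            (K : ℚ) * ∑ j ∈ ({1, 2} : Finset ℕ), (j : ℚ)) =
      (3 * (K : ℚ) ^ 2 - 2 * (K : ℚ) + 3) / (2 * (K : ℚ)) := by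
  have hKQ : (3 : ℚ) ≤ (K : ℚ) := by exact_mod_cast hK
  have hKpos : (0 : ℚ) < 2 * (K : ℚ) := by linarith
  constructor
  · intro B hB
    have key := key_ineq K hK B hB
    have hsum : ∑ j ∈ B, ((j : ℚ) ^ 2 + (K : ℚ) * j - (3 * (K : ℚ) + 1)) =
        (∑ j ∈ B, (j : ℚ) ^ 2) + (K : ℚ) * (∑ j ∈ B, (j : ℚ))
          - (3 * (K : ℚ) + 1) * B.card := by
      simp [Finset.sum_add_distrib, Finset.sum_sub_distrib, Finset.mul_sum]
      ring
    rw [hsum] at key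
    rw [div_le_iff₀ hKpos]
    have expand : (((K : ℚ) - B.card) +
            (1 / (2 * (K : ℚ))) *
              ((∑ j ∈ B, (j : ℚ) ^ 2) + ((K : ℚ) + 1) * ((K : ℚ) - B.card) +
                (K : ℚ) * ∑ j ∈ B, (j : ℚ))) * (2 * (K : ℚ)) =
        ((K : ℚ) - B.card) * (2 * (K : ℚ)) +
          ((∑ j ∈ B, (j : ℚ) ^ 2) + ((K : ℚ) + 1) * ((K : ℚ) - B.card) +
            (K : ℚ) * ∑ j ∈ B, (j : ℚ)) := by
      field_simp
    rw [expand]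
    nlinarith [key]
  · have c2 : (({1, 2} : Finset ℕ)).card = 2 := by decide
    have s1 : ∑ j ∈ ({1, 2} : Finset ℕ), (j : ℚ) = 3 := by norm_num
    have s2 : ∑ j ∈ ({1, 2} : Finset ℕ), (j : ℚ) ^ 2 = 5 := by norm_num
    rw [c2, s1, s2]
    field_simp
    ring
end

section
/- Fix a real ε with 0 < ε < 1 and a positive integer K. For every policy c = (c_1,…,c_K) of positive integers, Δ(c) ≥ (1 + p(c)/2) · ( S̄(c) + D̄(c) ). -/
open Finset

noncomputable section

/-- Cauchy–Schwarz in weighted form: `(∑ w x)² ≤ (∑ w) (∑ w x²)` for nonnegative weights. -/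
lemma aoi_cs_sum {ι : Type*} (s : Finset ι) (w x : ι → ℝ) (hw : ∀ i ∈ s, 0 ≤ w i) :
    (∑ i ∈ s, w i * x i) ^ 2 ≤ (∑ i ∈ s, w i) * ∑ i ∈ s, w i * x i ^ 2 := by
  have h := Finset.sum_mul_sq_le_sq_mul_sq s (fun i => Real.sqrt (w i))
    (fun i => Real.sqrt (w i) * x i)
  have e1 : ∀ i ∈ s, Real.sqrt (w i) * (Real.sqrt (w i) * x i) = w i * x i := fun i hi => by
    rw [← mul_assoc, Real.mul_self_sqrt (hw i hi)]
  have e2 : ∀ i ∈ s, Real.sqrt (w i) ^ 2 = w i := fun i hi => Real.sq_sqrt (hw i hi)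
  have e3 : ∀ i ∈ s, (Real.sqrt (w i) * x i) ^ 2 = w i * x i ^ 2 := fun i hi => by
    rw [mul_pow, Real.sq_sqrt (hw i hi)]
  rw [Finset.sum_congr rfl e1, Finset.sum_congr rfl e2, Finset.sum_congr rfl e3] at h
  exact h

/-- Product of finite geometric sums over a dependent pi type. -/
lemma aoi_key1 (ε : ℝ) (n : ℕ) (c : ℕ → ℕ) :
    (1 - ε) ^ n * ∑ i : (h : Fin n) → Fin (c (h.1 + 1)), ε ^ (∑ h, (i h).1)
      = ∏ h ∈ Finset.range n, (1 - ε ^ c (h + 1)) := by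
  have h1 : (∑ i : (h : Fin n) → Fin (c (h.1 + 1)), ε ^ (∑ h, (i h).1))
      = ∏ h : Fin n, ∑ j : Fin (c (h.1 + 1)), ε ^ (j : ℕ) := by
    rw [Fintype.prod_sum]
    exact Finset.sum_congr rfl fun i _ =>
      (Finset.prod_pow_eq_pow_sum Finset.univ (fun h => (i h : ℕ)) ε).symm
  have h2 : ∀ m : ℕ, (1 - ε) * ∑ j : Fin m, ε ^ (j : ℕ) = 1 - ε ^ m := by
    intro m
    rw [Fin.sum_univ_eq_sum_range (fun j => ε ^ j) m]
    linear_combination (-1 : ℝ) * geom_sum_mul ε m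
  calc (1 - ε) ^ n * ∑ i : (h : Fin n) → Fin (c (h.1 + 1)), ε ^ (∑ h, (i h).1)
      = ∏ h : Fin n, ((1 - ε) * ∑ j : Fin (c (h.1 + 1)), ε ^ (j : ℕ)) := by
        rw [h1, Finset.prod_mul_distrib, Finset.prod_const]
        simp
    _ = ∏ h : Fin n, (1 - ε ^ c (h.1 + 1)) := Finset.prod_congr rfl fun h _ => h2 _
    _ = ∏ h ∈ Finset.range n, (1 - ε ^ c (h + 1)) :=
        Fin.prod_univ_eq_prod_range (fun h => 1 - ε ^ c (h + 1)) n

/-- Telescoping identity. -/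
lemma aoi_key2 (ε : ℝ) (K : ℕ) (c : ℕ → ℕ) :
    ∑ m ∈ Finset.range K, (∏ h ∈ Finset.range m, (1 - ε ^ c (h + 1))) * ε ^ c (m + 1)
      = 1 - ∏ h ∈ Finset.range K, (1 - ε ^ c (h + 1)) := by
  have h : ∀ m ∈ Finset.range K,
      (∏ h ∈ Finset.range m, (1 - ε ^ c (h + 1))) * ε ^ c (m + 1)
        = (∏ h ∈ Finset.range m, (1 - ε ^ c (h + 1)))
            - ∏ h ∈ Finset.range (m + 1), (1 - ε ^ c (h + 1)) := by
    intro m _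
    rw [Finset.prod_range_succ]
    ring
  rw [Finset.sum_congr rfl h,
    Finset.sum_range_sub' (fun m => ∏ h ∈ Finset.range m, (1 - ε ^ c (h + 1)))]
  simp

/-- The purely algebraic core of Lemma 3. -/
lemma aoi_final (p S D S2v R : ℝ) (hp : 0 < p) (hp1 : p < 1)
    (hS : 0 < S) (hD : 0 ≤ D) (hR : 0 ≤ R)
    (hS2 : S ^ 2 ≤ S2v) (hD2 : p * D ^ 2 ≤ (1 - p) * R) :
    (1 + p / 2) * (S + D) ≤ S + (S2v / 2 + (R + 2 * D ^ 2) / 2 + S * D) / (S + D) := by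
  have hSD : 0 < S + D := by linarith
  have h1p : 0 < 1 - p := by linarith
  have hkey : p * (S + D) ^ 2 ≤ S2v + R := by
    have h2 : (1 - p) * (p * (S + D) ^ 2) ≤ (1 - p) * (S2v + R) := by
      nlinarith [sq_nonneg ((1 - p) * S - p * D), mul_le_mul_of_nonneg_left hS2 h1p.le]
    exact le_of_mul_le_mul_left h2 h1p
  have hmain : ((1 + p / 2) * (S + D) - S) * (S + D)
      ≤ S2v / 2 + (R + 2 * D ^ 2) / 2 + S * D := by nlinarith [hkey]
  have h3 := (le_div_iff₀ hSD).mpr hmain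
  linarith

/-- Lemma 3 of the paper: `Δ(c) ≥ (1 + p(c)/2) (S̄(c) + D̄(c))`. -/
theorem stmt8 (ε : ℝ) (hε0 : 0 < ε) (hε1 : ε < 1) (K : ℕ) (hK : 0 < K)
    (c : ℕ → ℕ) (hc : ∀ j ∈ Finset.Icc 1 K, 0 < c j) :
    (1 + succProb ε K c / 2) * (Sbar ε K c + Dbar ε K c) ≤ AoI ε K c := by
  classical
  have hε1' : (0:ℝ) ≤ 1 - ε := by linarith
  -- basic facts about p
  have hfac : ∀ j ∈ Finset.Icc 1 K, 0 < 1 - ε ^ c j := by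
    intro j hj
    have : ε ^ c j < 1 := pow_lt_one₀ hε0.le hε1 (hc j hj).ne'
    linarith
  have hp : 0 < succProb ε K c := Finset.prod_pos hfac
  have hp1 : succProb ε K c < 1 := by
    have h1K : (1:ℕ) ∈ Finset.Icc 1 K := Finset.mem_Icc.mpr ⟨le_refl 1, hK⟩
    have hsplit := (Finset.mul_prod_erase (Finset.Icc 1 K) (fun j => 1 - ε ^ c j) h1K).symm
    have hA : ∏ j ∈ (Finset.Icc 1 K).erase 1, (1 - ε ^ c j) ≤ 1 :=
      Finset.prod_le_one
        (fun j hj => (hfac j (Finset.mem_of_mem_erase hj)).le)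
        (fun j hj => by have := pow_pos hε0 (c j); linarith)
    have hAnn : (0:ℝ) ≤ ∏ j ∈ (Finset.Icc 1 K).erase 1, (1 - ε ^ c j) :=
      Finset.prod_nonneg fun j hj => (hfac j (Finset.mem_of_mem_erase hj)).le
    have hc1 : 0 < ε ^ c 1 := pow_pos hε0 _
    have hf1 : 1 - ε ^ c 1 < 1 := by linarith
    have hf1' : 0 < 1 - ε ^ c 1 := hfac 1 h1K
    rw [succProb] at *
    nlinarith [hsplit]
  -- range forms
  have hIccSum : ∀ (f : ℕ → ℝ),
      ∑ j ∈ Finset.Icc 1 K, f j = ∑ m ∈ Finset.range K, f (m + 1) := by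
    intro f
    rw [← Finset.Ico_add_one_right_eq_Icc, Finset.sum_Ico_eq_sum_range]
    simp only [Nat.add_sub_cancel]
    exact Finset.sum_congr rfl fun i _ => by rw [Nat.add_comm]
  have hPform : succProb ε K c = ∏ h ∈ Finset.range K, (1 - ε ^ c (h + 1)) := by
    rw [succProb, ← Finset.Ico_add_one_right_eq_Icc, Finset.prod_Ico_eq_prod_range]
    simp only [Nat.add_sub_cancel]
    exact Finset.prod_congr rfl fun i _ => by rw [Nat.add_comm]
  -- total weight for S
  have hW : (1 - ε) ^ K * ∑ i : (h : Fin K) → Fin (c (h.1 + 1)), ε ^ (∑ h, (i h).1)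
      = succProb ε K c := by rw [aoi_key1, hPform]
  -- Cauchy–Schwarz for S
  have hCS1 : (∑ i : (h : Fin K) → Fin (c (h.1 + 1)),
        (((∑ h, (i h).1) + K : ℕ) : ℝ) * ε ^ (∑ h, (i h).1)) ^ 2
      ≤ (∑ i : (h : Fin K) → Fin (c (h.1 + 1)), ε ^ (∑ h, (i h).1)) *
        ∑ i : (h : Fin K) → Fin (c (h.1 + 1)),
          (((∑ h, (i h).1) + K : ℕ) : ℝ) ^ 2 * ε ^ (∑ h, (i h).1) := by
    have h := aoi_cs_sum Finset.univ
      (fun i : (h : Fin K) → Fin (c (h.1 + 1)) => ε ^ (∑ h, (i h).1))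
      (fun i => (((∑ h, (i h).1) + K : ℕ) : ℝ)) (fun i _ => by positivity)
    have e1 : (∑ i : (h : Fin K) → Fin (c (h.1 + 1)),
        (((∑ h, (i h).1) + K : ℕ) : ℝ) * ε ^ (∑ h, (i h).1))
        = ∑ i : (h : Fin K) → Fin (c (h.1 + 1)),
            ε ^ (∑ h, (i h).1) * (((∑ h, (i h).1) + K : ℕ) : ℝ) :=
      Finset.sum_congr rfl fun i _ => mul_comm _ _
    have e2 : (∑ i : (h : Fin K) → Fin (c (h.1 + 1)),
        (((∑ h, (i h).1) + K : ℕ) : ℝ) ^ 2 * ε ^ (∑ h, (i h).1))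
        = ∑ i : (h : Fin K) → Fin (c (h.1 + 1)),
            ε ^ (∑ h, (i h).1) * (((∑ h, (i h).1) + K : ℕ) : ℝ) ^ 2 :=
      Finset.sum_congr rfl fun i _ => mul_comm _ _
    rw [e1, e2]
    exact h
  -- total weight for D
  have hWD : (∑ j ∈ Finset.Icc 1 K, ∑ i : (h : Fin (j - 1)) → Fin (c (h.1 + 1)),
      (1 - ε) ^ (j - 1) * ε ^ (c j + ∑ h, (i h).1)) = 1 - succProb ε K c := by
    have hinner : ∀ j : ℕ, (∑ i : (h : Fin (j - 1)) → Fin (c (h.1 + 1)),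
        (1 - ε) ^ (j - 1) * ε ^ (c j + ∑ h, (i h).1))
        = (∏ h ∈ Finset.range (j - 1), (1 - ε ^ c (h + 1))) * ε ^ c j := by
      intro j
      have e : ∀ i : (h : Fin (j - 1)) → Fin (c (h.1 + 1)),
          (1 - ε) ^ (j - 1) * ε ^ (c j + ∑ h, (i h).1)
            = (1 - ε) ^ (j - 1) * ε ^ (∑ h, (i h).1) * ε ^ c j := by
        intro i; rw [pow_add]; ring
      rw [Finset.sum_congr rfl fun i _ => e i, ← Finset.sum_mul, ← Finset.mul_sum, aoi_key1]
    rw [Finset.sum_congr rfl fun j _ => hinner j,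
      hIccSum fun j => (∏ h ∈ Finset.range (j - 1), (1 - ε ^ c (h + 1))) * ε ^ c j]
    simp only [Nat.add_sub_cancel]
    rw [aoi_key2, hPform]
  -- Cauchy–Schwarz for D (over the sigma type)
  have hCS2 : (∑ j ∈ Finset.Icc 1 K, ∑ i : (h : Fin (j - 1)) → Fin (c (h.1 + 1)),
        (1 - ε) ^ (j - 1) * ε ^ (c j + ∑ h, (i h).1) *
          (((j - 1) + c j + ∑ h, (i h).1 : ℕ) : ℝ)) ^ 2
      ≤ (∑ j ∈ Finset.Icc 1 K, ∑ i : (h : Fin (j - 1)) → Fin (c (h.1 + 1)),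
          (1 - ε) ^ (j - 1) * ε ^ (c j + ∑ h, (i h).1)) *
        ∑ j ∈ Finset.Icc 1 K, ∑ i : (h : Fin (j - 1)) → Fin (c (h.1 + 1)),
          (1 - ε) ^ (j - 1) * ε ^ (c j + ∑ h, (i h).1) *
            (((j - 1) + c j + ∑ h, (i h).1 : ℕ) : ℝ) ^ 2 := by
    have h := aoi_cs_sum
      ((Finset.Icc 1 K).sigma fun j =>
        (Finset.univ : Finset ((h : Fin (j - 1)) → Fin (c (h.1 + 1)))))
      (fun z => (1 - ε) ^ (z.1 - 1) * ε ^ (c z.1 + ∑ h, (z.2 h).1))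
      (fun z => (((z.1 - 1) + c z.1 + ∑ h, (z.2 h).1 : ℕ) : ℝ))
      (fun z _ => mul_nonneg (pow_nonneg hε1' _) (pow_nonneg hε0.le _))
    rw [Finset.sum_sigma, Finset.sum_sigma, Finset.sum_sigma] at h
    exact h
  -- positivity facts
  haveI hne : Nonempty ((h : Fin K) → Fin (c (h.1 + 1))) :=
    ⟨fun h => ⟨0, hc (h.1 + 1) (Finset.mem_Icc.mpr ⟨Nat.le_add_left 1 h.1, h.2⟩)⟩⟩
  have hX1pos : 0 < ∑ i : (h : Fin K) → Fin (c (h.1 + 1)),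
      (((∑ h, (i h).1) + K : ℕ) : ℝ) * ε ^ (∑ h, (i h).1) :=
    Finset.sum_pos (fun i _ => mul_pos
      (by exact_mod_cast Nat.cast_pos.mpr (by omega : 0 < (∑ h, (i h).1) + K))
      (pow_pos hε0 _)) Finset.univ_nonempty
  have hY1nn : 0 ≤ ∑ j ∈ Finset.Icc 1 K, ∑ i : (h : Fin (j - 1)) → Fin (c (h.1 + 1)),
      (1 - ε) ^ (j - 1) * ε ^ (c j + ∑ h, (i h).1) *
        (((j - 1) + c j + ∑ h, (i h).1 : ℕ) : ℝ) :=
    Finset.sum_nonneg fun j _ => Finset.sum_nonneg fun i _ =>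
      mul_nonneg (mul_nonneg (pow_nonneg hε1' _) (pow_nonneg hε0.le _)) (Nat.cast_nonneg _)
  have hY2nn : 0 ≤ ∑ j ∈ Finset.Icc 1 K, ∑ i : (h : Fin (j - 1)) → Fin (c (h.1 + 1)),
      (1 - ε) ^ (j - 1) * ε ^ (c j + ∑ h, (i h).1) *
        (((j - 1) + c j + ∑ h, (i h).1 : ℕ) : ℝ) ^ 2 :=
    Finset.sum_nonneg fun j _ => Finset.sum_nonneg fun i _ =>
      mul_nonneg (mul_nonneg (pow_nonneg hε1' _) (pow_nonneg hε0.le _)) (sq_nonneg _)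
  -- abbreviate
  rw [AoI]
  simp only [Sbar, S2, D2, Dbar]
  set q := succProb ε K c with hqdef
  set W := ∑ i : (h : Fin K) → Fin (c (h.1 + 1)), ε ^ (∑ h, (i h).1) with hWdef
  set X1 := ∑ i : (h : Fin K) → Fin (c (h.1 + 1)),
      (((∑ h, (i h).1) + K : ℕ) : ℝ) * ε ^ (∑ h, (i h).1) with hX1def
  set X2 := ∑ i : (h : Fin K) → Fin (c (h.1 + 1)),
      (((∑ h, (i h).1) + K : ℕ) : ℝ) ^ 2 * ε ^ (∑ h, (i h).1) with hX2def
  set Y0 := ∑ j ∈ Finset.Icc 1 K, ∑ i : (h : Fin (j - 1)) → Fin (c (h.1 + 1)),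
      (1 - ε) ^ (j - 1) * ε ^ (c j + ∑ h, (i h).1) with hY0def
  set Y1 := ∑ j ∈ Finset.Icc 1 K, ∑ i : (h : Fin (j - 1)) → Fin (c (h.1 + 1)),
      (1 - ε) ^ (j - 1) * ε ^ (c j + ∑ h, (i h).1) *
        (((j - 1) + c j + ∑ h, (i h).1 : ℕ) : ℝ) with hY1def
  set Y2 := ∑ j ∈ Finset.Icc 1 K, ∑ i : (h : Fin (j - 1)) → Fin (c (h.1 + 1)),
      (1 - ε) ^ (j - 1) * ε ^ (c j + ∑ h, (i h).1) *
        (((j - 1) + c j + ∑ h, (i h).1 : ℕ) : ℝ) ^ 2 with hY2def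
  -- derived inequalities
  have hC : 0 ≤ (1 - ε) ^ K / q := div_nonneg (pow_nonneg hε1' _) hp.le
  have hCW : ((1 - ε) ^ K / q) * W = 1 := by
    rw [div_mul_eq_mul_div, hW, div_self hp.ne']
  have hS2 : ((1 - ε) ^ K / q * X1) ^ 2 ≤ (1 - ε) ^ K / q * X2 := by
    calc ((1 - ε) ^ K / q * X1) ^ 2
        = (1 - ε) ^ K / q * ((1 - ε) ^ K / q * X1 ^ 2) := by ring
      _ ≤ (1 - ε) ^ K / q * ((1 - ε) ^ K / q * (W * X2)) :=
          mul_le_mul_of_nonneg_left (mul_le_mul_of_nonneg_left hCS1 hC) hC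
      _ = ((1 - ε) ^ K / q * W) * ((1 - ε) ^ K / q * X2) := by ring
      _ = (1 - ε) ^ K / q * X2 := by rw [hCW, one_mul]
  have hpp : q * (1 / q) = 1 := by field_simp
  have hD2 : q * (1 / q * Y1) ^ 2 ≤ (1 - q) * (1 / q * Y2) := by
    have hCS2' : Y1 ^ 2 ≤ (1 - q) * Y2 := by rw [← hWD]; exact hCS2
    calc q * (1 / q * Y1) ^ 2 = (q * (1 / q)) * (1 / q * Y1 ^ 2) := by ring
      _ = 1 / q * Y1 ^ 2 := by rw [hpp, one_mul]
      _ ≤ 1 / q * ((1 - q) * Y2) :=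
          mul_le_mul_of_nonneg_left hCS2' (by positivity)
      _ = (1 - q) * (1 / q * Y2) := by ring
  have hSpos : 0 < (1 - ε) ^ K / q * X1 :=
    mul_pos (div_pos (pow_pos (by linarith) _) hp) hX1pos
  have hDnn : 0 ≤ 1 / q * Y1 := mul_nonneg (by positivity) hY1nn
  have hRnn : 0 ≤ 1 / q * Y2 := mul_nonneg (by positivity) hY2nn
  exact aoi_final q ((1 - ε) ^ K / q * X1) (1 / q * Y1) ((1 - ε) ^ K / q * X2)
    (1 / q * Y2) hp hp1 hSpos hDnn hRnn hS2 hD2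

end
end

section
/- Fix a real ε with 0 < ε < 1 and a positive integer K. Let c = (c_1,…,c_K) be a policy of positive integers, and for 1 ≤ j ≤ K let X_j(c) = S̄(c|j) + D̄(c|j) where c|j = (c_1,…,c_j) is the truncated policy for updates of j packets. Then for every 1 ≤ j ≤ K−1, X_{j+1}(c) = 1/(1−ε) + X_j(c)/(1 − ε^{c_{j+1}}). -/
open Finset

noncomputable section

lemma sum_pi_succ (c : ℕ → ℕ) (j : ℕ) (f : ℕ → ℝ) :
    ∑ i : (h : Fin (j + 1)) → Fin (c (h.1 + 1)), f (∑ h, (i h).1)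
    = ∑ k : Fin (c (j + 1)), ∑ i : (h : Fin j) → Fin (c (h.1 + 1)),
        f ((∑ h, (i h).1) + k.1) := by
  rw [← Equiv.sum_comp (Fin.snocEquiv (fun h : Fin (j+1) => Fin (c (h.1 + 1))))]
  rw [Fintype.sum_prod_type]
  refine Finset.sum_congr rfl fun k _ => Finset.sum_congr rfl fun i _ => ?_
  congr 1
  rw [Fin.sum_univ_castSucc]
  simp [Fin.snocEquiv]

lemma geom1 (ε : ℝ) (n : ℕ) : (1 - ε) * ∑ k ∈ range n, ε ^ k = 1 - ε ^ n := by
  induction n with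
  | zero => simp
  | succ m ih => rw [Finset.sum_range_succ, mul_add, ih, pow_succ]; ring

lemma geom2 (ε : ℝ) (n : ℕ) :
    (1 - ε) * ∑ k ∈ range n, (k : ℝ) * ε ^ k
      = (∑ k ∈ range n, ε ^ k) - (1 - ε ^ n) - n * ε ^ n := by
  induction n with
  | zero => simp
  | succ m ih =>
    rw [Finset.sum_range_succ, Finset.sum_range_succ (fun k => ε ^ k)]
    push_cast [pow_succ]
    linear_combination ih

def Asum (ε : ℝ) (j : ℕ) (c : ℕ → ℕ) : ℝ :=
  ∑ i : (h : Fin j) → Fin (c (h.1 + 1)),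
    (((∑ h, (i h).1) + j : ℕ) : ℝ) * ε ^ (∑ h, (i h).1)

def Tsum (ε : ℝ) (j : ℕ) (c : ℕ → ℕ) : ℝ :=
  ∑ i : (h : Fin j) → Fin (c (h.1 + 1)), ε ^ (∑ h, (i h).1)

def Bsum (ε : ℝ) (j : ℕ) (c : ℕ → ℕ) : ℝ :=
  ∑ m ∈ Finset.Icc 1 j, ∑ i : (h : Fin (m - 1)) → Fin (c (h.1 + 1)),
    (1 - ε) ^ (m - 1) * ε ^ (c m + ∑ h, (i h).1) *
      (((m - 1) + c m + ∑ h, (i h).1 : ℕ) : ℝ)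

def Gsum (ε : ℝ) (n : ℕ) : ℝ := ∑ k ∈ range n, ε ^ k
def G1sum (ε : ℝ) (n : ℕ) : ℝ := ∑ k ∈ range n, (k : ℝ) * ε ^ k

lemma Sbar_eq (ε : ℝ) (j : ℕ) (c : ℕ → ℕ) :
    Sbar ε j c = (1 - ε) ^ j / succProb ε j c * Asum ε j c := rfl

lemma Dbar_eq (ε : ℝ) (j : ℕ) (c : ℕ → ℕ) :
    Dbar ε j c = 1 / succProb ε j c * Bsum ε j c := rfl

lemma succProb_succ (ε : ℝ) (j : ℕ) (c : ℕ → ℕ) :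
    succProb ε (j + 1) c = succProb ε j c * (1 - ε ^ c (j + 1)) :=
  Finset.prod_Icc_succ_top (by omega) _

lemma T_eq (ε : ℝ) (c : ℕ → ℕ) (j : ℕ) :
    Tsum ε j c = ∏ m ∈ Icc 1 j, ∑ k ∈ range (c m), ε ^ k := by
  unfold Tsum
  induction j with
  | zero => simp
  | succ n ih =>
    rw [sum_pi_succ c n (fun s => ε ^ s), Finset.prod_Icc_succ_top (by omega), ← ih,
      ← Fin.sum_univ_eq_sum_range (fun k => ε ^ k), Finset.mul_sum]
    refine Finset.sum_congr rfl fun k _ => ?_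
    rw [Finset.sum_mul]
    exact Finset.sum_congr rfl fun i _ => pow_add ε _ _

lemma T_prob (ε : ℝ) (c : ℕ → ℕ) (j : ℕ) :
    (1 - ε) ^ j * Tsum ε j c = succProb ε j c := by
  rw [T_eq]
  unfold succProb
  rw [show ((1 - ε : ℝ)) ^ j = ∏ _m ∈ Icc 1 j, (1 - ε) by
    rw [Finset.prod_const, Nat.card_Icc]; norm_num]
  rw [← Finset.prod_mul_distrib]
  exact Finset.prod_congr rfl fun m _ => geom1 ε (c m)

lemma Asum_succ (ε : ℝ) (j : ℕ) (c : ℕ → ℕ) :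
    Asum ε (j + 1) c = Gsum ε (c (j + 1)) * Asum ε j c
      + (G1sum ε (c (j + 1)) + Gsum ε (c (j + 1))) * Tsum ε j c := by
  unfold Asum Gsum G1sum Tsum
  rw [sum_pi_succ c j (fun s => ((s + (j + 1) : ℕ) : ℝ) * ε ^ s)]
  have point : ∀ k : Fin (c (j + 1)),
      ∑ i : (h : Fin j) → Fin (c (h.1 + 1)),
        ((((∑ h, (i h).1) + k.1) + (j + 1) : ℕ) : ℝ) * ε ^ ((∑ h, (i h).1) + k.1)
      = ε ^ k.1 * ∑ i : (h : Fin j) → Fin (c (h.1 + 1)),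
            (((∑ h, (i h).1) + j : ℕ) : ℝ) * ε ^ (∑ h, (i h).1)
        + ((k.1 : ℝ) * ε ^ k.1 + ε ^ k.1) *
            ∑ i : (h : Fin j) → Fin (c (h.1 + 1)), ε ^ (∑ h, (i h).1) := by
    intro k
    rw [Finset.mul_sum, Finset.mul_sum, ← Finset.sum_add_distrib]
    refine Finset.sum_congr rfl fun i _ => ?_
    push_cast [pow_add]; ring
  rw [Finset.sum_congr rfl fun k _ => point k, Finset.sum_add_distrib,
    ← Finset.sum_mul, ← Finset.sum_mul,
    Fin.sum_univ_eq_sum_range (fun k => ε ^ k),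
    Fin.sum_univ_eq_sum_range (fun k => (k : ℝ) * ε ^ k + ε ^ k),
    Finset.sum_add_distrib]

lemma Bsum_succ (ε : ℝ) (j : ℕ) (c : ℕ → ℕ) :
    Bsum ε (j + 1) c = Bsum ε j c
      + (1 - ε) ^ j * ε ^ c (j + 1) *
          (Asum ε j c + (c (j + 1) : ℝ) * Tsum ε j c) := by
  unfold Bsum
  rw [Finset.sum_Icc_succ_top (by omega)]
  congr 1
  show (∑ i : (h : Fin j) → Fin (c (h.1 + 1)),
      (1 - ε) ^ j * ε ^ (c (j + 1) + ∑ h, (i h).1) *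
        ((j + c (j + 1) + ∑ h, (i h).1 : ℕ) : ℝ)) = _
  unfold Asum Tsum
  rw [Finset.mul_sum, ← Finset.sum_add_distrib, Finset.mul_sum]
  refine Finset.sum_congr rfl fun i _ => ?_
  push_cast [pow_add]; ring

/-- The recursion for `X_j = S̄(c|j) + D̄(c|j)` from the proof of Lemma 4:
`X_{j+1} = 1/(1-ε) + X_j/(1 - ε^{c_{j+1}})` for `1 ≤ j ≤ K - 1`. -/
theorem stmt9 (ε : ℝ) (hε0 : 0 < ε) (hε1 : ε < 1) (K : ℕ) (hK : 0 < K)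
    (c : ℕ → ℕ) (hc : ∀ j ∈ Finset.Icc 1 K, 0 < c j)
    (j : ℕ) (hj1 : 1 ≤ j) (hjK : j + 1 ≤ K) :
    Sbar ε (j + 1) c + Dbar ε (j + 1) c =
      1 / (1 - ε) + (Sbar ε j c + Dbar ε j c) / (1 - ε ^ c (j + 1)) := by
  have hc' : 0 < c (j + 1) := hc _ (Finset.mem_Icc.mpr ⟨by omega, hjK⟩)
  have hL : (0 : ℝ) < 1 - ε := by linarith
  have hQ : (0 : ℝ) < 1 - ε ^ c (j + 1) := by
    have := pow_lt_one₀ hε0.le hε1 hc'.ne'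
    linarith
  have hP : (0 : ℝ) < succProb ε j c := by
    apply Finset.prod_pos
    intro m hm
    have hm' : 0 < c m := by
      apply hc
      rw [Finset.mem_Icc] at hm ⊢
      omega
    have := pow_lt_one₀ hε0.le hε1 hm'.ne'
    linarith
  have eT : Tsum ε j c = succProb ε j c / (1 - ε) ^ j := by
    rw [eq_div_iff (by positivity), mul_comm, T_prob]
  have eG : Gsum ε (c (j + 1)) = (1 - ε ^ c (j + 1)) / (1 - ε) := by
    rw [eq_div_iff hL.ne', mul_comm]; exact geom1 ε _
  have eG1 : G1sum ε (c (j + 1)) =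
      (Gsum ε (c (j + 1)) - (1 - ε ^ c (j + 1)) - (c (j + 1) : ℝ) * ε ^ c (j + 1)) /
        (1 - ε) := by
    rw [eq_div_iff hL.ne', mul_comm]; exact geom2 ε _
  rw [Sbar_eq, Dbar_eq, Sbar_eq, Dbar_eq, Asum_succ, Bsum_succ, succProb_succ, eG1, eG, eT]
  have h1 : ((1 - ε) : ℝ) ^ j ≠ 0 := by positivity
  field_simp
  ring
end
end

section
/- Fix a real ε with 0 < ε < 1 and a positive integer K. For every policy c = (c_1,…,c_K) of positive integers, S̄(c) + D̄(c) ≥ K/(1−ε). -/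
open Finset

noncomputable section

/-! ### Auxiliary definitions -/

/-- Partial geometric sum `A(m) = ∑_{x<m} ε^x`. -/
def aaF (ε : ℝ) (m : ℕ) : ℝ := ∑ x ∈ Finset.range m, ε ^ x

/-- Weighted geometric sum `C(m) = ∑_{x<m} (x+1) ε^x`. -/
def ccF (ε : ℝ) (m : ℕ) : ℝ := ∑ x ∈ Finset.range m, ((x + 1 : ℕ) : ℝ) * ε ^ x

def PAF (ε : ℝ) (c : ℕ → ℕ) (n : ℕ) : ℝ := ∏ l ∈ Finset.range n, aaF ε (c (l + 1))

def PQF (ε : ℝ) (c : ℕ → ℕ) (n : ℕ) : ℝ := ∏ l ∈ Finset.range n, (1 - ε ^ c (l + 1))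

def TTF (ε : ℝ) (c : ℕ → ℕ) (n : ℕ) : ℝ :=
  ∑ h ∈ Finset.range n, ∏ l ∈ Finset.range n,
    (if l = h then ccF ε (c (l + 1)) else aaF ε (c (l + 1)))

lemma aaF_mul (ε : ℝ) (m : ℕ) : (1 - ε) * aaF ε m = 1 - ε ^ m := by
  have := geom_sum_mul ε m
  unfold aaF; linarith [this]

lemma ccF_mul (ε : ℝ) (m : ℕ) : (1 - ε) * ccF ε m = aaF ε m - m * ε ^ m := by
  induction m with
  | zero => simp [aaF, ccF]
  | succ m ih =>
    unfold aaF ccF at *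
    rw [Finset.sum_range_succ, Finset.sum_range_succ (f := fun x => ε ^ x)]
    push_cast at ih ⊢
    linear_combination ih

lemma PQF_eq (ε : ℝ) (c : ℕ → ℕ) (n : ℕ) : PQF ε c n = (1 - ε) ^ n * PAF ε c n := by
  unfold PQF PAF
  have h : ∏ l ∈ Finset.range n, (1 - ε ^ c (l + 1))
      = ∏ l ∈ Finset.range n, ((1 - ε) * aaF ε (c (l + 1))) :=
    Finset.prod_congr rfl fun l _ => (aaF_mul ε (c (l + 1))).symm
  rw [h, Finset.prod_mul_distrib, Finset.prod_const, Finset.card_range]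

lemma TTF_succ (ε : ℝ) (c : ℕ → ℕ) (n : ℕ) :
    TTF ε c (n + 1) = aaF ε (c (n + 1)) * TTF ε c n + ccF ε (c (n + 1)) * PAF ε c n := by
  unfold TTF PAF
  rw [Finset.sum_range_succ]
  have h1 : ∀ h ∈ Finset.range n,
      (∏ l ∈ Finset.range (n+1), (if l = h then ccF ε (c (l+1)) else aaF ε (c (l+1))))
      = aaF ε (c (n+1)) * ∏ l ∈ Finset.range n, (if l = h then ccF ε (c (l+1)) else aaF ε (c (l+1))) := by
    intro h hh
    rw [Finset.prod_range_succ, if_neg (by simp at hh; omega), mul_comm]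
  rw [Finset.sum_congr rfl h1]
  rw [Finset.prod_range_succ, if_pos rfl]
  have h2 : (∏ l ∈ Finset.range n, (if l = n then ccF ε (c (l+1)) else aaF ε (c (l+1))))
      = ∏ l ∈ Finset.range n, aaF ε (c (l+1)) := by
    refine Finset.prod_congr rfl fun l hl => ?_
    rw [if_neg (by simp at hl; omega)]
  rw [h2, ← Finset.mul_sum]
  ring

/-! ### Factorisation of the multi-index sums -/

lemma F1 (ε : ℝ) (n : ℕ) (d : Fin n → ℕ) :
    (∑ i : (h : Fin n) → Fin (d h), ε ^ (∑ h, (i h).1)) = ∏ h : Fin n, aaF ε (d h) := by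
  have key : ∀ i : (h : Fin n) → Fin (d h), ε ^ (∑ h, (i h).1) = ∏ h : Fin n, ε ^ (i h).1 := by
    intro i; rw [Finset.prod_pow_eq_pow_sum]
  simp only [key]
  have hps := Finset.prod_univ_sum (t := fun h : Fin n => (Finset.univ : Finset (Fin (d h))))
    (f := fun h x => ε ^ (x : ℕ))
  rw [← Fintype.piFinset_univ, ← hps]
  refine Finset.prod_congr rfl fun h _ => ?_
  exact Fin.sum_univ_eq_sum_range (fun x => ε ^ x) (d h)

lemma F2 (ε : ℝ) (n : ℕ) (d : Fin n → ℕ) :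
    (∑ i : (h : Fin n) → Fin (d h), ((∑ h, (i h).1 + n : ℕ) : ℝ) * ε ^ (∑ h, (i h).1))
      = ∑ h : Fin n, ∏ l : Fin n, (if l = h then ccF ε (d l) else aaF ε (d l)) := by
  have key : ∀ i : (h : Fin n) → Fin (d h),
      ((∑ h, (i h).1 + n : ℕ) : ℝ) * ε ^ (∑ h, (i h).1)
      = ∑ h : Fin n, ∏ l : Fin n,
          (if l = h then (((i l).1 + 1 : ℕ) : ℝ) * ε ^ (i l).1 else ε ^ (i l).1) := by
    intro i
    have h2 : ε ^ (∑ h, (i h).1) = ∏ h : Fin n, ε ^ (i h).1 := by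
      rw [Finset.prod_pow_eq_pow_sum]
    have h3 : ∀ h : Fin n, (∏ l : Fin n,
        (if l = h then (((i l).1 + 1 : ℕ) : ℝ) * ε ^ (i l).1 else ε ^ (i l).1))
        = (((i h).1 + 1 : ℕ) : ℝ) * ∏ l : Fin n, ε ^ (i l).1 := by
      intro h
      have : ∀ l : Fin n, (if l = h then (((i l).1 + 1 : ℕ) : ℝ) * ε ^ (i l).1 else ε ^ (i l).1)
          = (if l = h then (((i l).1 + 1 : ℕ) : ℝ) else 1) * ε ^ (i l).1 := by
        intro l; split <;> simp
      simp only [this]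
      rw [Finset.prod_mul_distrib, Finset.prod_ite_eq' Finset.univ h
        (fun l => (((i l).1 + 1 : ℕ) : ℝ)), if_pos (Finset.mem_univ h)]
    simp only [h3, h2, ← Finset.sum_mul]
    congr 1
    push_cast
    rw [Finset.sum_add_distrib]
    simp [mul_comm]
  simp only [key]
  rw [Finset.sum_comm]
  refine Finset.sum_congr rfl fun h _ => ?_
  have hps := Finset.prod_univ_sum (t := fun l : Fin n => (Finset.univ : Finset (Fin (d l))))
    (f := fun l x => if l = h then (((x : ℕ) + 1 : ℕ) : ℝ) * ε ^ (x : ℕ) else ε ^ (x : ℕ))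
  rw [← Fintype.piFinset_univ, ← hps]
  refine Finset.prod_congr rfl fun l _ => ?_
  by_cases hl : l = h
  · rw [if_pos hl]
    have : ∀ x : Fin (d l), (if l = h then (((x).1 + 1 : ℕ) : ℝ) * ε ^ (x).1 else ε ^ (x).1)
        = (((x).1 + 1 : ℕ) : ℝ) * ε ^ (x).1 := fun x => if_pos hl
    simp only [this]
    exact Fin.sum_univ_eq_sum_range (fun x => ((x + 1 : ℕ) : ℝ) * ε ^ x) (d l)
  · rw [if_neg hl]
    have : ∀ x : Fin (d l), (if l = h then (((x).1 + 1 : ℕ) : ℝ) * ε ^ (x).1 else ε ^ (x).1)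
        = ε ^ (x).1 := fun x => if_neg hl
    simp only [this]
    exact Fin.sum_univ_eq_sum_range (fun x => ε ^ x) (d l)

lemma F1' (ε : ℝ) (c : ℕ → ℕ) (n : ℕ) :
    (∑ i : (h : Fin n) → Fin (c (h.1 + 1)), ε ^ (∑ h, (i h).1)) = PAF ε c n := by
  rw [F1]
  exact Fin.prod_univ_eq_prod_range (fun l => aaF ε (c (l + 1))) n

lemma F2' (ε : ℝ) (c : ℕ → ℕ) (n : ℕ) :
    (∑ i : (h : Fin n) → Fin (c (h.1 + 1)),
        ((∑ h, (i h).1 + n : ℕ) : ℝ) * ε ^ (∑ h, (i h).1)) = TTF ε c n := by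
  rw [F2]
  have hinner : ∀ h : Fin n,
      (∏ l : Fin n, (if l = h then ccF ε (c (l.1 + 1)) else aaF ε (c (l.1 + 1))))
      = ∏ l ∈ Finset.range n, (if l = h.1 then ccF ε (c (l + 1)) else aaF ε (c (l + 1))) := by
    intro h
    rw [← Fin.prod_univ_eq_prod_range
      (fun l => if l = h.1 then ccF ε (c (l + 1)) else aaF ε (c (l + 1))) n]
    refine Finset.prod_congr rfl fun l _ => ?_
    by_cases hl : l = h
    · rw [if_pos hl, if_pos (by rw [hl])]
    · rw [if_neg hl, if_neg (fun e => hl (Fin.ext e))]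
  simp only [hinner]
  exact Fin.sum_univ_eq_sum_range
    (fun h => ∏ l ∈ Finset.range n, (if l = h then ccF ε (c (l + 1)) else aaF ε (c (l + 1)))) n

/-! ### The key identity -/

lemma mainId (ε : ℝ) (c : ℕ → ℕ) (K : ℕ) :
    (1 - ε) * ((1 - ε) ^ K * TTF ε c K
      + ∑ j ∈ Finset.range K,
          (1 - ε) ^ j * ε ^ c (j + 1) * ((c (j + 1) : ℝ) * PAF ε c j + TTF ε c j))
    = K * PQF ε c K + ∑ j ∈ Finset.range K, (j : ℝ) * ε ^ c (j + 1) * PQF ε c j := by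
  induction K with
  | zero => simp [TTF, PQF]
  | succ K ih =>
    rw [Finset.sum_range_succ, Finset.sum_range_succ
      (f := fun j => (j : ℝ) * ε ^ c (j + 1) * PQF ε c j), TTF_succ]
    have hq : PQF ε c (K + 1) = PQF ε c K * (1 - ε ^ c (K + 1)) := Finset.prod_range_succ _ _
    rw [hq]
    have ha := aaF_mul ε (c (K + 1))
    have hcc := ccF_mul ε (c (K + 1))
    have hp := PQF_eq ε c K
    push_cast
    linear_combination ih
      + ((1 - ε) ^ (K + 1) * TTF ε c K + (1 - ε) ^ K * PAF ε c K) * ha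
      + ((1 - ε) ^ (K + 1) * PAF ε c K) * hcc
      - (1 - ε ^ c (K + 1)) * hp

lemma innerD (ε : ℝ) (c : ℕ → ℕ) (j : ℕ) :
    (∑ i : (h : Fin (j - 1)) → Fin (c (h.1 + 1)),
        (1 - ε) ^ (j - 1) * ε ^ (c j + ∑ h, (i h).1)
          * (((j - 1) + c j + ∑ h, (i h).1 : ℕ) : ℝ))
    = (1 - ε) ^ (j - 1) * ε ^ c j
        * ((c j : ℝ) * PAF ε c (j - 1) + TTF ε c (j - 1)) := by
  have hsummand : ∀ i : (h : Fin (j - 1)) → Fin (c (h.1 + 1)),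
      (1 - ε) ^ (j - 1) * ε ^ (c j + ∑ h, (i h).1)
        * (((j - 1) + c j + ∑ h, (i h).1 : ℕ) : ℝ)
      = (1 - ε) ^ (j - 1) * ε ^ c j
          * ((c j : ℝ) * ε ^ (∑ h, (i h).1)
            + ((∑ h, (i h).1 + (j - 1) : ℕ) : ℝ) * ε ^ (∑ h, (i h).1)) := by
    intro i
    rw [pow_add]
    push_cast
    ring
  rw [Finset.sum_congr rfl fun i _ => hsummand i, ← Finset.mul_sum]
  congr 1
  rw [Finset.sum_add_distrib, ← Finset.mul_sum, F1' ε c (j - 1), F2' ε c (j - 1)]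

/-- Lemma 4 of the paper: `S̄(c) + D̄(c) ≥ K/(1-ε)` for every policy `c`. -/
theorem stmt10 (ε : ℝ) (hε0 : 0 < ε) (hε1 : ε < 1) (K : ℕ) (hK : 0 < K)
    (c : ℕ → ℕ) (hc : ∀ j ∈ Finset.Icc 1 K, 0 < c j) :
    (K : ℝ) / (1 - ε) ≤ Sbar ε K c + Dbar ε K c := by
  have h1ε : 0 < 1 - ε := by linarith
  have hprob : succProb ε K c = PQF ε c K := by
    unfold succProb PQF
    rw [show Finset.Icc 1 K = Finset.Ico 1 (K + 1) from (Finset.Ico_add_one_right_eq_Icc 1 K).symm,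
      Finset.prod_Ico_eq_prod_range]
    simp [add_comm]
  have hS : Sbar ε K c = ((1 - ε) ^ K / succProb ε K c) * TTF ε c K := by
    unfold Sbar
    rw [F2' ε c K]
  have hD : Dbar ε K c = (1 / succProb ε K c) *
      ∑ j ∈ Finset.range K,
        (1 - ε) ^ j * ε ^ c (j + 1) * ((c (j + 1) : ℝ) * PAF ε c j + TTF ε c j) := by
    unfold Dbar
    congr 1
    rw [Finset.sum_congr rfl fun j _ => innerD ε c j]
    rw [show Finset.Icc 1 K = Finset.Ico 1 (K + 1) from (Finset.Ico_add_one_right_eq_Icc 1 K).symm,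
      Finset.sum_Ico_eq_sum_range]
    simp [add_comm]
  have hpq : 0 < PQF ε c K := by
    refine Finset.prod_pos fun l hl => ?_
    have hcl : 0 < c (l + 1) := hc (l + 1) (by
      simp only [Finset.mem_range] at hl
      simp only [Finset.mem_Icc]
      omega)
    have : ε ^ c (l + 1) < 1 := pow_lt_one₀ hε0.le hε1 (by omega)
    linarith
  set SD := ∑ j ∈ Finset.range K,
      (1 - ε) ^ j * ε ^ c (j + 1) * ((c (j + 1) : ℝ) * PAF ε c j + TTF ε c j) with hSD
  have hcomb : Sbar ε K c + Dbar ε K c = ((1 - ε) ^ K * TTF ε c K + SD) / PQF ε c K := by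
    rw [hS, hD, hprob]
    ring
  rw [hcomb, div_le_div_iff₀ h1ε hpq]
  have hmain := mainId ε c K
  have hE : 0 ≤ ∑ j ∈ Finset.range K, (j : ℝ) * ε ^ c (j + 1) * PQF ε c j := by
    refine Finset.sum_nonneg fun j _ => ?_
    have h1 : (0:ℝ) ≤ (j : ℝ) := Nat.cast_nonneg j
    have h2 : (0:ℝ) ≤ ε ^ c (j + 1) := pow_nonneg hε0.le _
    have h3 : 0 ≤ PQF ε c j := by
      refine Finset.prod_nonneg fun l _ => ?_
      have : ε ^ c (l + 1) ≤ 1 := pow_le_one₀ hε0.le hε1.le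
      linarith
    positivity
  nlinarith [hmain, hE]
end
end

section
/- Fix a real ε with 0 < ε < 1 and a positive integer K. For every policy c = (c_1,…,c_K) of positive integers, Δ(c) ≥ (K/(1−ε)) · ( 1 + (1−ε)^K/2 ). -/
open Finset

noncomputable section

namespace AoIAux

variable (ε : ℝ) (c : ℕ → ℕ)

def Ac (n : ℕ) : ℝ := ∑ i : (h : Fin n) → Fin (c (h.1 + 1)), ε ^ (∑ h, (i h).1)

def Bc (n : ℕ) : ℝ :=
  ∑ i : (h : Fin n) → Fin (c (h.1 + 1)), (((∑ h, (i h).1) + n : ℕ) : ℝ) * ε ^ (∑ h, (i h).1)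

def Pp (n : ℕ) : ℝ := ∏ j ∈ Finset.Icc 1 n, (1 - ε ^ c j)

lemma sum_pi_snoc (n : ℕ) (f : ℕ → ℝ) :
    (∑ i : (h : Fin (n+1)) → Fin (c (h.1 + 1)), f (∑ h, (i h).1)) =
      ∑ x : Fin (c (n+1)), ∑ i : (h : Fin n) → Fin (c (h.1 + 1)), f ((∑ h, (i h).1) + x.1) := by
  have key := Fintype.sum_equiv (Fin.snocEquiv (fun h : Fin (n+1) => Fin (c (h.1 + 1))))
    (fun p : Fin (c (n+1)) × ((h : Fin n) → Fin (c (h.1 + 1))) => f ((∑ h, (p.2 h).1) + p.1.1))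
    (fun i => f (∑ h, (i h).1)) ?_
  · rw [← key]
    exact Fintype.sum_prod_type _
  · intro p
    simp only [Fin.snocEquiv_apply]
    congr 1
    rw [Fin.sum_univ_castSucc]
    simp

lemma Ac_zero : Ac ε c 0 = 1 := by simp [Ac]

lemma Bc_zero : Bc ε c 0 = 0 := by simp [Bc]

lemma Ac_succ (n : ℕ) :
    Ac ε c (n+1) = Ac ε c n * ∑ x ∈ Finset.range (c (n+1)), ε ^ x := by
  rw [Ac, sum_pi_snoc c n (fun s => ε ^ s)]
  rw [← Fin.sum_univ_eq_sum_range (fun x => ε ^ x) (c (n+1)), Finset.mul_sum]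
  refine Finset.sum_congr rfl fun x _ => ?_
  rw [Ac, Finset.sum_mul]
  refine Finset.sum_congr rfl fun i _ => ?_
  rw [pow_add]

lemma Bc_succ (n : ℕ) :
    Bc ε c (n+1) = Bc ε c n * (∑ x ∈ Finset.range (c (n+1)), ε ^ x)
      + Ac ε c n * ∑ x ∈ Finset.range (c (n+1)), ((x + 1 : ℕ) : ℝ) * ε ^ x := by
  rw [Bc, sum_pi_snoc c n (fun s => ((s + (n+1) : ℕ) : ℝ) * ε ^ s)]
  rw [← Fin.sum_univ_eq_sum_range (fun x => ε ^ x) (c (n+1)),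
      ← Fin.sum_univ_eq_sum_range (fun x => ((x + 1 : ℕ) : ℝ) * ε ^ x) (c (n+1))]
  rw [Finset.mul_sum, Finset.mul_sum, ← Finset.sum_add_distrib]
  refine Finset.sum_congr rfl fun x _ => ?_
  rw [Bc, Ac, Finset.sum_mul, Finset.sum_mul, ← Finset.sum_add_distrib]
  refine Finset.sum_congr rfl fun i _ => ?_
  push_cast
  rw [pow_add]
  ring

lemma geom (n : ℕ) : (1 - ε) * ∑ x ∈ Finset.range n, ε ^ x = 1 - ε ^ n := by
  have := geom_sum_mul ε n
  linarith [this]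

lemma geom' (n : ℕ) :
    (1 - ε) * ∑ x ∈ Finset.range n, ((x + 1 : ℕ) : ℝ) * ε ^ x
      = (∑ x ∈ Finset.range n, ε ^ x) - (n : ℝ) * ε ^ n := by
  induction n with
  | zero => simp
  | succ m ih =>
    rw [Finset.sum_range_succ, Finset.sum_range_succ (fun x => ε ^ x)]
    push_cast
    push_cast at ih
    linear_combination ih

lemma Pp_succ (n : ℕ) : Pp ε c (n+1) = Pp ε c n * (1 - ε ^ c (n+1)) := by
  rw [Pp, Pp, Finset.prod_Icc_succ_top (Nat.le_add_left 1 n)]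

lemma Ac_prod (n : ℕ) : (1 - ε) ^ n * Ac ε c n = Pp ε c n := by
  induction n with
  | zero => simp [Ac_zero, Pp]
  | succ m ih =>
    rw [Ac_succ, Pp_succ]
    linear_combination (1 - ε ^ c (m+1)) * ih + ((1 - ε) ^ m * Ac ε c m) * geom ε (c (m+1))


/-- Main identity: `p(S̄+D̄)` in closed form. -/
lemma Xident (K : ℕ) :
    (1 - ε) ^ K * Bc ε c K
      + ∑ j ∈ Finset.Icc 1 K, (1 - ε) ^ (j-1) * ε ^ (c j)
          * (Bc ε c (j-1) + (c j : ℝ) * Ac ε c (j-1))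
      = ∑ j ∈ Finset.Icc 1 K, (1 - ε) ^ (j-1) * Ac ε c j := by
  induction K with
  | zero => simp [Bc_zero]
  | succ m ih =>
    rw [Finset.sum_Icc_succ_top (Nat.le_add_left 1 m),
        Finset.sum_Icc_succ_top (Nat.le_add_left 1 m)]
    simp only [Nat.add_sub_cancel]
    rw [Ac_succ, Bc_succ]
    linear_combination ih + ((1 - ε) ^ m * Bc ε c m) * geom ε (c (m+1))
      + ((1 - ε) ^ m * Ac ε c m) * geom' ε (c (m+1))

lemma tele (K : ℕ) :
    ∑ j ∈ Finset.Icc 1 K, ε ^ (c j) * Pp ε c (j-1) = 1 - Pp ε c K := by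
  induction K with
  | zero => simp [Pp]
  | succ m ih =>
    rw [Finset.sum_Icc_succ_top (Nat.le_add_left 1 m), ih]
    simp only [Nat.add_sub_cancel]
    rw [Pp_succ]
    ring

lemma Pp_pos (hε0 : 0 < ε) (hε1 : ε < 1) (hc : ∀ j ∈ Finset.Icc 1 K, 0 < c j) :
    ∀ n ≤ K, 0 < Pp ε c n := by
  intro n hn
  refine Finset.prod_pos fun j hj => ?_
  have hj' : j ∈ Finset.Icc 1 K := by
    simp only [Finset.mem_Icc] at hj ⊢; omega
  have : ε ^ c j < 1 := pow_lt_one₀ hε0.le hε1 (hc j hj').ne'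
  linarith

lemma Pp_le (hε0 : 0 < ε) (hε1 : ε < 1) (K : ℕ) (hc : ∀ j ∈ Finset.Icc 1 K, 0 < c j) :
    ∀ d j, j + d ≤ K → Pp ε c (j + d) ≤ Pp ε c j := by
  intro d
  induction d with
  | zero => intro j _; exact le_refl _
  | succ e ih =>
    intro j hj
    have h1 : Pp ε c (j + e + 1) ≤ Pp ε c (j + e) := by
      rw [Pp_succ]
      have hc' : ∀ i ∈ Finset.Icc 1 (j + e), 0 < c i := fun i hi => hc i (by
        simp only [Finset.mem_Icc] at hi ⊢; omega)
      have hpos := Pp_pos ε c (K := j + e) hε0 hε1 hc' (j + e) le_rfl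
      nlinarith [pow_pos hε0 (c (j + e + 1))]
    calc Pp ε c (j + (e+1)) = Pp ε c (j + e + 1) := by ring_nf
      _ ≤ Pp ε c (j + e) := h1
      _ ≤ Pp ε c j := ih j (by omega)


def B2c (n : ℕ) : ℝ :=
  ∑ i : (h : Fin n) → Fin (c (h.1 + 1)), (((∑ h, (i h).1) + n : ℕ) : ℝ) ^ 2 * ε ^ (∑ h, (i h).1)

lemma CS_gen {ι : Type*} [Fintype ι] (w x : ι → ℝ) (hw : ∀ i, 0 ≤ w i) :
    (∑ i, x i * w i) ^ 2 ≤ (∑ i, w i) * (∑ i, x i ^ 2 * w i) :=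
  sum_sq_le_sum_mul_sum_of_sq_eq_mul Finset.univ
    (fun i _ => hw i) (fun i _ => by have := hw i; positivity) (fun i _ => by ring)

lemma CS_S (hε : 0 ≤ ε) (n : ℕ) : (Bc ε c n) ^ 2 ≤ Ac ε c n * B2c ε c n := by
  have h := CS_gen (fun i : (h : Fin n) → Fin (c (h.1 + 1)) => ε ^ (∑ h, (i h).1))
    (fun i => (((∑ h, (i h).1) + n : ℕ) : ℝ)) (fun i => pow_nonneg hε _)
  rw [Bc, Ac, B2c]
  exact h

lemma CS_gen2 {ι : Type*} (s : Finset ι) (w x : ι → ℝ) (hw : ∀ i ∈ s, 0 ≤ w i) :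
    (∑ i ∈ s, w i * x i) ^ 2 ≤ (∑ i ∈ s, w i) * (∑ i ∈ s, w i * x i ^ 2) :=
  sum_sq_le_sum_mul_sum_of_sq_eq_mul s
    hw (fun i hi => mul_nonneg (hw i hi) (sq_nonneg _)) (fun i _ => by ring)

lemma Dinner (hε0 : 0 < ε) (hε1 : ε < 1) (j : ℕ) (hj : 1 ≤ j) :
    (∑ i : (h : Fin (j - 1)) → Fin (c (h.1 + 1)),
        (1 - ε) ^ (j - 1) * ε ^ (c j + ∑ h, (i h).1)
          * (((j - 1) + c j + ∑ h, (i h).1 : ℕ) : ℝ))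
      = (1 - ε) ^ (j - 1) * ε ^ (c j) * (Bc ε c (j - 1) + (c j : ℝ) * Ac ε c (j - 1)) := by
  obtain ⟨m, rfl⟩ : ∃ m, j = m + 1 := ⟨j - 1, by omega⟩
  show (∑ i : (h : Fin m) → Fin (c (h.1 + 1)),
      (1 - ε) ^ m * ε ^ (c (m+1) + ∑ h, (i h).1)
        * ((m + c (m+1) + ∑ h, (i h).1 : ℕ) : ℝ))
    = (1 - ε) ^ m * ε ^ (c (m+1)) * (Bc ε c m + (c (m+1) : ℝ) * Ac ε c m)
  rw [Bc, Ac, Finset.mul_sum, mul_add, Finset.mul_sum, Finset.mul_sum,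
    ← Finset.sum_add_distrib]
  refine Finset.sum_congr rfl fun i _ => ?_
  rw [pow_add]
  push_cast
  ring

lemma Dweight (j : ℕ) (hj : 1 ≤ j) :
    (∑ i : (h : Fin (j - 1)) → Fin (c (h.1 + 1)),
        (1 - ε) ^ (j - 1) * ε ^ (c j + ∑ h, (i h).1))
      = ε ^ (c j) * Pp ε c (j - 1) := by
  obtain ⟨m, rfl⟩ : ∃ m, j = m + 1 := ⟨j - 1, by omega⟩
  show (∑ i : (h : Fin m) → Fin (c (h.1 + 1)), (1 - ε) ^ m * ε ^ (c (m+1) + ∑ h, (i h).1))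
    = ε ^ (c (m+1)) * Pp ε c m
  rw [← Ac_prod, Ac, Finset.mul_sum, Finset.mul_sum]
  refine Finset.sum_congr rfl fun i _ => ?_
  rw [pow_add]
  ring

lemma Bc_pos (hε0 : 0 < ε) (K : ℕ) (hK : 0 < K) (hc : ∀ j ∈ Finset.Icc 1 K, 0 < c j) :
    0 < Bc ε c K := by
  rw [Bc]
  have hne : Nonempty ((h : Fin K) → Fin (c (h.1 + 1))) :=
    ⟨fun h => ⟨0, hc (h.1 + 1) (by simp only [Finset.mem_Icc]; omega)⟩⟩
  refine Finset.sum_pos (fun i _ => ?_) Finset.univ_nonempty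
  have h1 : 0 < ((∑ h, (i h).1) + K : ℕ) := by omega
  exact mul_pos (by exact_mod_cast Nat.cast_pos.mpr h1) (pow_pos hε0 _)

lemma key_ineq (p a b S2v W : ℝ) (hp1 : p < 1) (ha : 0 < a) (hb : 0 ≤ b) (hWnn : 0 ≤ W)
    (hS2g : a ^ 2 ≤ S2v) (hqW : p * b ^ 2 ≤ (1 - p) * W) :
    ((1 + p / 2) * (a + b) - a) * (a + b) ≤ S2v / 2 + (W + 2 * b ^ 2) / 2 + a * b := by
  have hq : (0:ℝ) < 1 - p := by linarith
  have h5 : p * (a + b) ^ 2 ≤ a ^ 2 + W := by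
    nlinarith [sq_nonneg ((1 - p) * a - p * b), hqW, hq, ha, hb, hWnn]
  nlinarith [hS2g, h5]
end AoIAux

open AoIAux

/-- The lower bound of Theorem 5 of the paper:
`Δ(c) ≥ (K/(1-ε)) (1 + (1-ε)^K/2)` for every policy `c`. -/
theorem stmt11 (ε : ℝ) (hε0 : 0 < ε) (hε1 : ε < 1) (K : ℕ) (hK : 0 < K)
    (c : ℕ → ℕ) (hc : ∀ j ∈ Finset.Icc 1 K, 0 < c j) :
    ((K : ℝ) / (1 - ε)) * (1 + (1 - ε) ^ K / 2) ≤ AoI ε K c := by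
  have hε1' : (0:ℝ) < 1 - ε := by linarith
  -- definitional unfoldings
  have hSbar : Sbar ε K c = ((1 - ε) ^ K / succProb ε K c) * Bc ε c K := rfl
  have hS2 : S2 ε K c = ((1 - ε) ^ K / succProb ε K c) * B2c ε c K := rfl
  have hDbar : Dbar ε K c = (1 / succProb ε K c) *
      ∑ j ∈ Finset.Icc 1 K, ∑ i : (h : Fin (j - 1)) → Fin (c (h.1 + 1)),
        (1 - ε) ^ (j - 1) * ε ^ (c j + ∑ h, (i h).1) *
          (((j - 1) + c j + ∑ h, (i h).1 : ℕ) : ℝ) := rfl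
  have hD2 : D2 ε K c = (1 / succProb ε K c) *
      (∑ j ∈ Finset.Icc 1 K, ∑ i : (h : Fin (j - 1)) → Fin (c (h.1 + 1)),
        (1 - ε) ^ (j - 1) * ε ^ (c j + ∑ h, (i h).1) *
          (((j - 1) + c j + ∑ h, (i h).1 : ℕ) : ℝ) ^ 2)
      + 2 * Dbar ε K c ^ 2 := rfl
  have hAoI : AoI ε K c = Sbar ε K c +
      (S2 ε K c / 2 + D2 ε K c / 2 + Sbar ε K c * Dbar ε K c) /
        (Sbar ε K c + Dbar ε K c) := rfl
  have hPp : succProb ε K c = Pp ε c K := rfl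
  -- abstract the sums as opaque variables
  obtain ⟨DS, hDS_def⟩ : ∃ x, (∑ j ∈ Finset.Icc 1 K, ∑ i : (h : Fin (j - 1)) → Fin (c (h.1 + 1)),
      (1 - ε) ^ (j - 1) * ε ^ (c j + ∑ h, (i h).1) *
        (((j - 1) + c j + ∑ h, (i h).1 : ℕ) : ℝ)) = x := ⟨_, rfl⟩
  obtain ⟨D2S, hD2S_def⟩ : ∃ x, (∑ j ∈ Finset.Icc 1 K, ∑ i : (h : Fin (j - 1)) → Fin (c (h.1 + 1)),
      (1 - ε) ^ (j - 1) * ε ^ (c j + ∑ h, (i h).1) *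
        (((j - 1) + c j + ∑ h, (i h).1 : ℕ) : ℝ) ^ 2) = x := ⟨_, rfl⟩
  obtain ⟨p, hp_def⟩ : ∃ x, succProb ε K c = x := ⟨_, rfl⟩
  obtain ⟨a, ha_def⟩ : ∃ x, Sbar ε K c = x := ⟨_, rfl⟩
  obtain ⟨b, hb_def⟩ : ∃ x, Dbar ε K c = x := ⟨_, rfl⟩
  obtain ⟨S2v, hS2v_def⟩ : ∃ x, S2 ε K c = x := ⟨_, rfl⟩
  obtain ⟨D2v, hD2v_def⟩ : ∃ x, D2 ε K c = x := ⟨_, rfl⟩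
  obtain ⟨Av, hAv_def⟩ : ∃ x, AoI ε K c = x := ⟨_, rfl⟩
  rw [hp_def] at hPp hSbar hS2 hDbar hD2
  rw [ha_def] at hSbar hAoI
  rw [hb_def] at hDbar hAoI hD2
  rw [hS2v_def] at hS2 hAoI
  rw [hD2v_def] at hD2 hAoI
  rw [hAv_def] at hAoI
  rw [hDS_def] at hDbar
  rw [hD2S_def] at hD2
  rw [hAv_def]
  -- basic facts about p
  have hp : 0 < p := by rw [hPp]; exact Pp_pos ε c hε0 hε1 hc K le_rfl
  have hp1 : p < 1 := by
    have h1K : (1:ℕ) ∈ Finset.Icc 1 K := by simp only [Finset.mem_Icc]; omega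
    have hsplit := Finset.mul_prod_erase (Finset.Icc 1 K) (fun j => 1 - ε ^ c j) h1K
    have hrest : ∏ x ∈ (Finset.Icc 1 K).erase 1, (1 - ε ^ c x) ≤ 1 := by
      refine Finset.prod_le_one (fun i hi => ?_) (fun i hi => ?_)
      · have hi' : i ∈ Finset.Icc 1 K := Finset.mem_of_mem_erase hi
        have : ε ^ c i < 1 := pow_lt_one₀ hε0.le hε1 (hc i hi').ne'
        linarith
      · nlinarith [pow_pos hε0 (c i)]
    have hf1 : 0 < ε ^ c 1 := pow_pos hε0 _
    have hf1' : (0:ℝ) ≤ 1 - ε ^ c 1 := by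
      nlinarith [pow_lt_one₀ hε0.le hε1 (hc 1 h1K).ne']
    have hple : p ≤ 1 - ε ^ c 1 := by
      calc p = Pp ε c K := hPp
        _ = (1 - ε ^ c 1) * ∏ x ∈ (Finset.Icc 1 K).erase 1, (1 - ε ^ c x) := by
            rw [Pp]; exact hsplit.symm
        _ ≤ (1 - ε ^ c 1) * 1 := mul_le_mul_of_nonneg_left hrest hf1'
        _ = 1 - ε ^ c 1 := mul_one _
    linarith
  have hpe : (1 - ε) ^ K ≤ p := by
    have h : ∏ _j ∈ Finset.Icc 1 K, (1 - ε) ≤ ∏ j ∈ Finset.Icc 1 K, (1 - ε ^ c j) := by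
      refine Finset.prod_le_prod (fun i _ => hε1'.le) (fun i hi => ?_)
      have : ε ^ c i ≤ ε ^ 1 := pow_le_pow_of_le_one hε0.le hε1.le (hc i hi)
      rw [pow_one] at this
      linarith
    rw [hPp, Pp]
    simpa [Nat.card_Icc] using h
  -- positivity
  have hBc : 0 < Bc ε c K := Bc_pos ε c hε0 K hK hc
  have ht : 0 < (1 - ε) ^ K / p := div_pos (pow_pos hε1' K) hp
  have ha : 0 < a := by rw [hSbar]; exact mul_pos ht hBc
  have hDSnn : 0 ≤ DS := by
    rw [← hDS_def]
    refine Finset.sum_nonneg fun j _ => Finset.sum_nonneg fun i _ => ?_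
    exact mul_nonneg (mul_nonneg (pow_nonneg hε1'.le _) (pow_nonneg hε0.le _))
      (Nat.cast_nonneg _)
  have hD2Snn : 0 ≤ D2S := by
    rw [← hD2S_def]
    refine Finset.sum_nonneg fun j _ => Finset.sum_nonneg fun i _ => ?_
    exact mul_nonneg (mul_nonneg (pow_nonneg hε1'.le _) (pow_nonneg hε0.le _))
      (sq_nonneg _)
  have hb : 0 ≤ b := by
    rw [hDbar]
    exact mul_nonneg (by positivity) hDSnn
  have hab0 : 0 < a + b := by linarith
  -- closed form for DS
  have hDS_eq : DS = ∑ j ∈ Finset.Icc 1 K,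
      (1 - ε) ^ (j - 1) * ε ^ (c j) * (Bc ε c (j - 1) + (c j : ℝ) * Ac ε c (j - 1)) := by
    rw [← hDS_def]
    refine Finset.sum_congr rfl fun j hj => ?_
    exact Dinner ε c hε0 hε1 j (Finset.mem_Icc.mp hj).1
  -- p * (a + b) closed form
  have hpa : p * a = (1 - ε) ^ K * Bc ε c K := by
    rw [hSbar]; field_simp
  have hpb : p * b = DS := by
    rw [hDbar]; field_simp
  have hX : p * (a + b) = ∑ j ∈ Finset.Icc 1 K, (1 - ε) ^ (j - 1) * Ac ε c j := by
    rw [mul_add, hpa, hpb, hDS_eq]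
    exact Xident ε c K
  -- Lemma 4: a + b ≥ K/(1-ε)
  have hterm : ∀ j ∈ Finset.Icc 1 K, p / (1 - ε) ≤ (1 - ε) ^ (j - 1) * Ac ε c j := by
    intro j hj
    obtain ⟨hj1, hjK⟩ := Finset.mem_Icc.mp hj
    have hPj : (1 - ε) ^ (j - 1) * Ac ε c j = Pp ε c j / (1 - ε) := by
      obtain ⟨m, rfl⟩ : ∃ m, j = m + 1 := ⟨j - 1, by omega⟩
      rw [eq_div_iff hε1'.ne', Nat.add_sub_cancel]
      calc (1 - ε) ^ m * Ac ε c (m + 1) * (1 - ε)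
          = (1 - ε) ^ (m + 1) * Ac ε c (m + 1) := by ring
        _ = Pp ε c (m + 1) := Ac_prod ε c (m + 1)
    rw [hPj, hPp]
    have hle : Pp ε c K ≤ Pp ε c j := by
      have := Pp_le ε c hε0 hε1 K hc (K - j) j (by omega)
      rwa [Nat.add_sub_cancel' hjK] at this
    exact (div_le_div_iff_of_pos_right hε1').mpr hle
  have hsum : (K : ℝ) * (p / (1 - ε)) ≤ ∑ j ∈ Finset.Icc 1 K, (1 - ε) ^ (j - 1) * Ac ε c j := by
    calc (K : ℝ) * (p / (1 - ε)) = ∑ _j ∈ Finset.Icc 1 K, p / (1 - ε) := by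
          rw [Finset.sum_const, Nat.card_Icc, Nat.add_sub_cancel, nsmul_eq_mul]
      _ ≤ _ := Finset.sum_le_sum hterm
  have hab : (K : ℝ) / (1 - ε) ≤ a + b := by
    have h1 : p * ((K : ℝ) / (1 - ε)) ≤ p * (a + b) := by
      rw [hX]
      calc p * ((K : ℝ) / (1 - ε)) = (K : ℝ) * (p / (1 - ε)) := by ring
        _ ≤ _ := hsum
    exact le_of_mul_le_mul_left h1 hp
  -- Jensen for S
  have hS2g : a ^ 2 ≤ S2v := by
    have hCS := CS_S ε c hε0.le K
    have htAc : ((1 - ε) ^ K / p) * Ac ε c K = 1 := by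
      rw [div_mul_eq_mul_div, Ac_prod, ← hPp, div_self hp.ne']
    rw [hSbar, hS2]
    calc (((1 - ε) ^ K / p) * Bc ε c K) ^ 2
        = ((1 - ε) ^ K / p) ^ 2 * (Bc ε c K) ^ 2 := by ring
      _ ≤ ((1 - ε) ^ K / p) ^ 2 * (Ac ε c K * B2c ε c K) :=
          mul_le_mul_of_nonneg_left hCS (sq_nonneg _)
      _ = (((1 - ε) ^ K / p) * Ac ε c K) * (((1 - ε) ^ K / p) * B2c ε c K) := by ring
      _ = ((1 - ε) ^ K / p) * B2c ε c K := by rw [htAc, one_mul]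
  -- Cauchy-Schwarz for D over the sigma type
  have hCSD : DS ^ 2 ≤ (1 - p) * D2S := by
    have hCS := CS_gen2 ((Finset.Icc 1 K).sigma
        (fun j => (Finset.univ : Finset ((h : Fin (j - 1)) → Fin (c (h.1 + 1))))))
      (fun σ => (1 - ε) ^ (σ.1 - 1) * ε ^ (c σ.1 + ∑ h, (σ.2 h).1))
      (fun σ => (((σ.1 - 1) + c σ.1 + ∑ h, (σ.2 h).1 : ℕ) : ℝ))
      (fun σ _ => mul_nonneg (pow_nonneg hε1'.le _) (pow_nonneg hε0.le _))
    have e1 := Finset.sum_sigma' (Finset.Icc 1 K)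
      (fun j => (Finset.univ : Finset ((h : Fin (j - 1)) → Fin (c (h.1 + 1)))))
      (fun j i => (1 - ε) ^ (j - 1) * ε ^ (c j + ∑ h, (i h).1) *
        (((j - 1) + c j + ∑ h, (i h).1 : ℕ) : ℝ))
    have e2 := Finset.sum_sigma' (Finset.Icc 1 K)
      (fun j => (Finset.univ : Finset ((h : Fin (j - 1)) → Fin (c (h.1 + 1)))))
      (fun j i => (1 - ε) ^ (j - 1) * ε ^ (c j + ∑ h, (i h).1))
    have e3 := Finset.sum_sigma' (Finset.Icc 1 K)
      (fun j => (Finset.univ : Finset ((h : Fin (j - 1)) → Fin (c (h.1 + 1)))))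
      (fun j i => (1 - ε) ^ (j - 1) * ε ^ (c j + ∑ h, (i h).1) *
        (((j - 1) + c j + ∑ h, (i h).1 : ℕ) : ℝ) ^ 2)
    beta_reduce at hCS e1 e2 e3
    rw [← e1, ← e2, ← e3] at hCS
    rw [hDS_def] at hCS
    rw [hD2S_def] at hCS
    have hwsum : (∑ j ∈ Finset.Icc 1 K, ∑ i : (h : Fin (j - 1)) → Fin (c (h.1 + 1)),
        (1 - ε) ^ (j - 1) * ε ^ (c j + ∑ h, (i h).1)) = 1 - p := by
      rw [hPp, ← tele ε c K]
      refine Finset.sum_congr rfl fun j hj => ?_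
      exact Dweight ε c j (Finset.mem_Icc.mp hj).1
    rw [hwsum] at hCS
    exact hCS
  -- second moment bound for D
  have hqW : p * b ^ 2 ≤ (1 - p) * ((1 / p) * D2S) := by
    have h1 : p * b ^ 2 = DS ^ 2 / p := by
      rw [hDbar]; field_simp
    have h2 : (1 - p) * ((1 / p) * D2S) = ((1 - p) * D2S) / p := by
      field_simp
    rw [h1, h2]
    exact (div_le_div_iff_of_pos_right hp).mpr hCSD
  have hWnn : (0:ℝ) ≤ (1 / p) * D2S := mul_nonneg (by positivity) hD2Snn
  -- key quadratic inequality
  have hkey := key_ineq p a b S2v ((1 / p) * D2S) hp1 ha hb hWnn hS2g hqW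
  rw [← hD2] at hkey
  have hkey2 : (1 + p / 2) * (a + b) ≤ Av := by
    have hdiv : (1 + p / 2) * (a + b) - a
        ≤ (S2v / 2 + D2v / 2 + a * b) / (a + b) :=
      (le_div_iff₀ hab0).mpr hkey
    rw [hAoI]
    linarith
  -- conclusion
  have hfac : 1 + (1 - ε) ^ K / 2 ≤ 1 + p / 2 := by linarith
  calc ((K : ℝ) / (1 - ε)) * (1 + (1 - ε) ^ K / 2)
      ≤ (a + b) * (1 + p / 2) := mul_le_mul hab hfac (by positivity) hab0.le
    _ = (1 + p / 2) * (a + b) := mul_comm _ _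
    _ ≤ Av := hkey2
end
end

section
/- Fix a real ε with 0 < ε < 1 and a positive integer K. If c* = (c*_1,…,c*_K) is a policy of positive integers such that PAoI(c*) ≤ PAoI(c) for every policy c of positive integers, then c*_1 ≤ c*_2 ≤ ⋯ ≤ c*_K. -/
open Finset

noncomputable section

def mgS (ε : ℝ) (x : ℕ) : ℝ := ∑ k ∈ Finset.range x, ε ^ k
def mgT (ε : ℝ) (x : ℕ) : ℝ := ∑ k ∈ Finset.range x, (k : ℝ) * ε ^ k

lemma mgS_pos {ε : ℝ} (hε : 0 ≤ ε) {x : ℕ} (hx : 1 ≤ x) : 0 < mgS ε x := by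
  have h1 : (1:ℝ) = ∑ k ∈ range 1, ε ^ k := by simp
  have h2 : ∑ k ∈ range 1, ε ^ k ≤ ∑ k ∈ range x, ε ^ k :=
    Finset.sum_le_sum_of_subset_of_nonneg (Finset.range_subset_range.2 hx)
      (fun i _ _ => pow_nonneg hε i)
  unfold mgS; linarith

lemma mgT_nonneg {ε : ℝ} (hε : 0 ≤ ε) (x : ℕ) : 0 ≤ mgT ε x :=
  Finset.sum_nonneg fun k _ => mul_nonneg (Nat.cast_nonneg k) (pow_nonneg hε k)

lemma mgS_mul (ε : ℝ) (x : ℕ) : (1 - ε) * mgS ε x = 1 - ε ^ x := by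
  induction x with
  | zero => simp [mgS]
  | succ n ih =>
    unfold mgS at ih ⊢
    rw [Finset.sum_range_succ, mul_add, ih, pow_succ]; ring

lemma mgT_mul (ε : ℝ) (x : ℕ) :
    (1 - ε) * mgT ε x = mgS ε x - 1 - ((x : ℝ) - 1) * ε ^ x := by
  induction x with
  | zero => simp [mgT, mgS]
  | succ n ih =>
    unfold mgT mgS at ih ⊢
    rw [Finset.sum_range_succ, Finset.sum_range_succ (f := fun k => ε ^ k), mul_add, ih]
    push_cast
    ring

lemma my_piA (ε : ℝ) (n : ℕ) (m : Fin n → ℕ) :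
    ∑ i : (h : Fin n) → Fin (m h), ε ^ (∑ h, (i h).1) = ∏ h, mgS ε (m h) := by
  have key := Finset.prod_univ_sum (fun h : Fin n => (univ : Finset (Fin (m h))))
    (fun h k => ε ^ k.1)
  rw [Fintype.piFinset_univ] at key
  have h1 : ∀ h : Fin n, ∑ k : Fin (m h), ε ^ k.1 = mgS ε (m h) := fun h =>
    Fin.sum_univ_eq_sum_range (fun k => ε ^ k) (m h)
  calc ∑ i : (h : Fin n) → Fin (m h), ε ^ (∑ h, (i h).1)
      = ∑ i : (h : Fin n) → Fin (m h), ∏ h, ε ^ (i h).1 := by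
        refine Finset.sum_congr rfl fun i _ => ?_
        rw [← Finset.prod_pow_eq_pow_sum]
    _ = ∏ h, ∑ k : Fin (m h), ε ^ k.1 := key.symm
    _ = ∏ h, mgS ε (m h) := Finset.prod_congr rfl fun h _ => h1 h

lemma my_piB (ε : ℝ) (n : ℕ) (m : Fin n → ℕ) :
    ∑ i : (h : Fin n) → Fin (m h), ((∑ h, (i h).1 : ℕ) : ℝ) * ε ^ (∑ h, (i h).1)
      = ∑ g : Fin n, mgT ε (m g) * ∏ h ∈ univ.erase g, mgS ε (m h) := by
  have step1 : ∀ i : (h : Fin n) → Fin (m h),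
      ((∑ h, (i h).1 : ℕ) : ℝ) * ε ^ (∑ h, (i h).1)
        = ∑ g : Fin n, (((i g).1 : ℝ) * ε ^ (i g).1) * ∏ h ∈ univ.erase g, ε ^ (i h).1 := by
    intro i
    have hcast : ((∑ h, (i h).1 : ℕ) : ℝ) = ∑ g : Fin n, ((i g).1 : ℝ) := by push_cast; rfl
    rw [hcast, Finset.sum_mul]
    refine Finset.sum_congr rfl fun g _ => ?_
    have hpow : ε ^ (∑ h, (i h).1) = ε ^ (i g).1 * ∏ h ∈ univ.erase g, ε ^ (i h).1 := by
      rw [← Finset.add_sum_erase univ (fun h => (i h).1) (mem_univ g), pow_add,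
        ← Finset.prod_pow_eq_pow_sum]
    rw [hpow]; ring
  rw [Finset.sum_congr rfl fun i _ => step1 i, Finset.sum_comm]
  refine Finset.sum_congr rfl fun g _ => ?_
  -- ∑ i, (i g * ε^(i g)) * ∏_{h ≠ g} ε^(i h)  =  mgT (m g) * ∏_{h≠g} mgS (m h)
  have hre : ∀ i : (h : Fin n) → Fin (m h),
      (((i g).1 : ℝ) * ε ^ (i g).1) * ∏ h ∈ univ.erase g, ε ^ (i h).1
        = ∏ h : Fin n, (if h = g then ((i h).1 : ℝ) * ε ^ (i h).1 else ε ^ (i h).1) := by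
    intro i
    rw [← Finset.mul_prod_erase univ _ (mem_univ g), if_pos rfl]
    congr 1
    exact (Finset.prod_congr rfl fun h hh => by
      rw [if_neg (Finset.ne_of_mem_erase hh)]).symm
  rw [Finset.sum_congr rfl fun i _ => hre i]
  have key := Finset.prod_univ_sum (fun h : Fin n => (univ : Finset (Fin (m h))))
    (fun h k => (if h = g then ((k).1 : ℝ) * ε ^ (k).1 else ε ^ (k).1))
  rw [Fintype.piFinset_univ] at key
  rw [← key, ← Finset.mul_prod_erase univ _ (mem_univ g)]
  congr 1
  · rw [Finset.sum_congr rfl fun (k : Fin (m g)) _ => if_pos rfl]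
    exact Fin.sum_univ_eq_sum_range (fun k => (k : ℝ) * ε ^ k) (m g)
  · refine Finset.prod_congr rfl fun h hh => ?_
    rw [Finset.sum_congr rfl fun k _ => if_neg (Finset.ne_of_mem_erase hh)]
    exact Fin.sum_univ_eq_sum_range (fun k => ε ^ k) (m h)

lemma my_key (ε : ℝ) (hε : 0 ≤ ε) (n : ℕ) (m : Fin n → ℕ) (hm : ∀ h, 1 ≤ m h) (r : ℕ) :
    ∑ i : (h : Fin n) → Fin (m h), ((r + ∑ h, (i h).1 : ℕ) : ℝ) * ε ^ (∑ h, (i h).1)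
      = (∏ h, mgS ε (m h)) * ((r : ℝ) + ∑ g : Fin n, mgT ε (m g) / mgS ε (m g)) := by
  have hpos : ∀ h : Fin n, 0 < mgS ε (m h) := fun h => mgS_pos hε (hm h)
  have expand : ∀ i : (h : Fin n) → Fin (m h),
      ((r + ∑ h, (i h).1 : ℕ) : ℝ) * ε ^ (∑ h, (i h).1)
        = (r : ℝ) * ε ^ (∑ h, (i h).1)
          + ((∑ h, (i h).1 : ℕ) : ℝ) * ε ^ (∑ h, (i h).1) := by
    intro i; push_cast; ring
  rw [Finset.sum_congr rfl fun i _ => expand i, Finset.sum_add_distrib, ← Finset.mul_sum,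
    my_piA, my_piB, mul_add]
  congr 1
  · ring
  · rw [Finset.mul_sum]
    refine Finset.sum_congr rfl fun g _ => ?_
    have : ∏ h, mgS ε (m h) = mgS ε (m g) * ∏ h ∈ univ.erase g, mgS ε (m h) :=
      (Finset.mul_prod_erase univ _ (mem_univ g)).symm
    rw [this, mul_comm (mgS ε (m g)), mul_assoc,
      mul_div_cancel₀ _ (ne_of_gt (hpos g))]
    ring

section SwapLemmas

open Finset

lemma my_swap_pt (n J : ℕ) (hn : J + 2 ≤ n) (h : Fin n) :
    (Equiv.swap (J+1) (J+2)) (h.1+1)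
      = ((Equiv.swap (⟨J, by omega⟩ : Fin n) (⟨J+1, by omega⟩ : Fin n)) h).1 + 1 := by
  by_cases h1 : h = (⟨J, by omega⟩ : Fin n)
  · subst h1
    rw [Equiv.swap_apply_left]
    simp only [Equiv.swap_apply_left]
  · by_cases h2 : h = (⟨J+1, by omega⟩ : Fin n)
    · subst h2
      rw [Equiv.swap_apply_right]
      simp only [Equiv.swap_apply_right]
    · rw [Equiv.swap_apply_of_ne_of_ne h1 h2]
      have hv1 : h.1 ≠ J := fun e => h1 (Fin.ext e)
      have hv2 : h.1 ≠ J + 1 := fun e => h2 (Fin.ext e)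
      exact Equiv.swap_apply_of_ne_of_ne (by omega) (by omega)

lemma my_sum_swap (n J : ℕ) (hn : J + 2 ≤ n) (f : ℕ → ℝ) :
    ∑ h : Fin n, f ((Equiv.swap (J+1) (J+2)) (h.1+1)) = ∑ h : Fin n, f (h.1+1) := by
  have e := Equiv.sum_comp (Equiv.swap (⟨J, by omega⟩ : Fin n) (⟨J+1, by omega⟩ : Fin n))
    (fun h : Fin n => f (h.1+1))
  refine Eq.trans ?_ e
  exact Finset.sum_congr rfl fun h _ => by rw [my_swap_pt n J hn h]

lemma my_prod_swap (n J : ℕ) (hn : J + 2 ≤ n) (f : ℕ → ℝ) :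
    ∏ h : Fin n, f ((Equiv.swap (J+1) (J+2)) (h.1+1)) = ∏ h : Fin n, f (h.1+1) := by
  have e := Equiv.prod_comp (Equiv.swap (⟨J, by omega⟩ : Fin n) (⟨J+1, by omega⟩ : Fin n))
    (fun h : Fin n => f (h.1+1))
  refine Eq.trans ?_ e
  exact Finset.prod_congr rfl fun h _ => by rw [my_swap_pt n J hn h]

lemma my_swap_mem (K J : ℕ) (hJ : J + 2 ≤ K) :
    ∀ x ∈ Finset.Icc 1 K, (Equiv.swap (J+1) (J+2)) x ∈ Finset.Icc 1 K := by
  intro x hx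
  simp only [Finset.mem_Icc] at hx ⊢
  rcases eq_or_ne x (J+1) with rfl | h1
  · rw [Equiv.swap_apply_left]; omega
  rcases eq_or_ne x (J+2) with rfl | h2
  · rw [Equiv.swap_apply_right]; omega
  · rw [Equiv.swap_apply_of_ne_of_ne h1 h2]; omega

end SwapLemmas

open Finset in
noncomputable def mG (ε : ℝ) (c : ℕ → ℕ) (j : ℕ) : ℝ :=
  (1-ε)^(j-1) * ε^(c j) * ((∏ h : Fin (j-1), mgS ε (c (h.1+1))) *
    ((((j-1) + c j : ℕ) : ℝ) + ∑ g : Fin (j-1), mgT ε (c (g.1+1)) / mgS ε (c (g.1+1))))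

open Finset in
lemma my_inner (ε : ℝ) (hε : 0 ≤ ε) (j : ℕ) (c : ℕ → ℕ)
    (hm : ∀ h : Fin (j-1), 1 ≤ c (h.1+1)) :
    ∑ i : (h : Fin (j-1)) → Fin (c (h.1+1)),
        (1 - ε) ^ (j-1) * ε ^ (c j + ∑ h, (i h).1) *
          (((j - 1) + c j + ∑ h, (i h).1 : ℕ) : ℝ)
      = mG ε c j := by
  unfold mG
  rw [← my_key ε hε (j-1) (fun h => c (h.1+1)) hm ((j-1) + c j), Finset.mul_sum]
  refine Finset.sum_congr rfl fun i _ => ?_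
  rw [pow_add]
  ring

open Finset in
lemma my_core (ε : ℝ) (hε0 : 0 < ε) (hε1 : ε < 1) (J a b : ℕ) (hb : 1 ≤ b) (hba : b < a)
    (P R : ℝ) (hP : 0 < P) (hR : 0 ≤ R) :
    (1-ε)^J * ε^b * (P * (((J + b : ℕ) : ℝ) + R))
      + (1-ε)^(J+1) * ε^a *
          ((P * mgS ε b) * (((J+1+a : ℕ) : ℝ) + (R + mgT ε b / mgS ε b)))
    < (1-ε)^J * ε^a * (P * (((J + a : ℕ) : ℝ) + R))
      + (1-ε)^(J+1) * ε^b *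
          ((P * mgS ε a) * (((J+1+b : ℕ) : ℝ) + (R + mgT ε a / mgS ε a))) := by
  have hd : (0:ℝ) < 1 - ε := by linarith
  have ha1 : 1 ≤ a := by omega
  have hSa := mgS_pos hε0.le ha1
  have hSb := mgS_pos hε0.le hb
  have hTa' : mgT ε a = (mgS ε a - 1 - ((a:ℝ)-1)*ε^a)/(1-ε) := by
    rw [eq_div_iff (ne_of_gt hd)]
    linarith [mgT_mul ε a]
  have hTb' : mgT ε b = (mgS ε b - 1 - ((b:ℝ)-1)*ε^b)/(1-ε) := by
    rw [eq_div_iff (ne_of_gt hd)]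
    linarith [mgT_mul ε b]
  have hSa' : mgS ε a = (1 - ε^a)/(1-ε) := by
    rw [eq_div_iff (ne_of_gt hd)]
    linarith [mgS_mul ε a]
  have hSb' : mgS ε b = (1 - ε^b)/(1-ε) := by
    rw [eq_div_iff (ne_of_gt hd)]
    linarith [mgS_mul ε b]
  have hpow : ε^a < ε^b := pow_lt_pow_right_of_lt_one₀ hε0 hε1 hba
  have key :
      ((1-ε)^J * ε^a * (P * (((J + a : ℕ) : ℝ) + R))
        + (1-ε)^(J+1) * ε^b *
            ((P * mgS ε a) * (((J+1+b : ℕ) : ℝ) + (R + mgT ε a / mgS ε a))))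
      - ((1-ε)^J * ε^b * (P * (((J + b : ℕ) : ℝ) + R))
        + (1-ε)^(J+1) * ε^a *
            ((P * mgS ε b) * (((J+1+a : ℕ) : ℝ) + (R + mgT ε b / mgS ε b))))
      = (1-ε)^J * P * ((ε^b - ε^a)/(1-ε)) := by
    have hd0 : (1:ℝ) - ε ≠ 0 := ne_of_gt hd
    have hea : ε ^ a < 1 := pow_lt_one₀ hε0.le hε1 (by omega)
    have heb : ε ^ b < 1 := pow_lt_one₀ hε0.le hε1 (by omega)
    have hea0 : (1:ℝ) - ε ^ a ≠ 0 := by linarith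
    have heb0 : (1:ℝ) - ε ^ b ≠ 0 := by linarith
    rw [hTa', hTb', hSa', hSb']
    push_cast
    rw [pow_succ]
    field_simp
    ring
  have hpos2 : 0 < (1-ε)^J * P * ((ε^b - ε^a)/(1-ε)) := by
    apply mul_pos (mul_pos (pow_pos hd J) hP)
    exact div_pos (by linarith) hd
  linarith

open Finset in
lemma my_mG_eq (ε : ℝ) (J : ℕ) (c c' : ℕ → ℕ)
    (hcc : ∀ y, c' y = c ((Equiv.swap (J+1) (J+2)) y)) (x : ℕ)
    (hx1 : 1 ≤ x) (hx2 : x ≠ J+1) (hx3 : x ≠ J+2) : mG ε c' x = mG ε c x := by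
  simp only [mG, hcc]
  rw [Equiv.swap_apply_of_ne_of_ne hx2 hx3]
  rcases Nat.lt_or_ge x (J+1) with hlt | hge
  · have hfix : ∀ h : Fin (x-1), (Equiv.swap (J+1) (J+2)) (h.1+1) = h.1+1 := by
      intro h
      have := h.2
      exact Equiv.swap_apply_of_ne_of_ne (by omega) (by omega)
    simp only [hfix]
  · have hge' : J + 3 ≤ x := by omega
    have e1 : ∏ h : Fin (x-1), mgS ε (c ((Equiv.swap (J+1) (J+2)) (h.1+1)))
        = ∏ h : Fin (x-1), mgS ε (c (h.1+1)) :=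
      my_prod_swap (x-1) J (by omega) (fun y => mgS ε (c y))
    have e2 : ∑ g : Fin (x-1), mgT ε (c ((Equiv.swap (J+1) (J+2)) (g.1+1)))
          / mgS ε (c ((Equiv.swap (J+1) (J+2)) (g.1+1)))
        = ∑ g : Fin (x-1), mgT ε (c (g.1+1)) / mgS ε (c (g.1+1)) :=
      my_sum_swap (x-1) J (by omega) (fun y => mgT ε (c y) / mgS ε (c y))
    rw [e1, e2]

open Finset in
lemma my_pair (ε : ℝ) (hε0 : 0 < ε) (hε1 : ε < 1) (J : ℕ) (c c' : ℕ → ℕ)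
    (hcc : ∀ y, c' y = c ((Equiv.swap (J+1) (J+2)) y))
    (hpos : ∀ y, 1 ≤ y → y ≤ J + 2 → 1 ≤ c y)
    (hba : c (J+2) < c (J+1)) :
    mG ε c' (J+1) + mG ε c' (J+2) < mG ε c (J+1) + mG ε c (J+2) := by
  have hfix : ∀ h : Fin J, (Equiv.swap (J+1) (J+2)) (h.1+1) = h.1+1 := by
    intro h; have := h.2
    exact Equiv.swap_apply_of_ne_of_ne (by omega) (by omega)
  have E1 : mG ε c (J+1) = (1-ε)^J * ε^(c (J+1)) *
      ((∏ h : Fin J, mgS ε (c (h.1+1))) *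
        (((J + c (J+1) : ℕ) : ℝ) +
          ∑ g : Fin J, mgT ε (c (g.1+1)) / mgS ε (c (g.1+1)))) := rfl
  have E2 : mG ε c (J+2) = (1-ε)^(J+1) * ε^(c (J+2)) *
      ((∏ h : Fin (J+1), mgS ε (c (h.1+1))) *
        ((((J+1) + c (J+2) : ℕ) : ℝ) +
          ∑ g : Fin (J+1), mgT ε (c (g.1+1)) / mgS ε (c (g.1+1)))) := rfl
  have E1' : mG ε c' (J+1) = (1-ε)^J * ε^(c' (J+1)) *
      ((∏ h : Fin J, mgS ε (c' (h.1+1))) *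
        (((J + c' (J+1) : ℕ) : ℝ) +
          ∑ g : Fin J, mgT ε (c' (g.1+1)) / mgS ε (c' (g.1+1)))) := rfl
  have E2' : mG ε c' (J+2) = (1-ε)^(J+1) * ε^(c' (J+2)) *
      ((∏ h : Fin (J+1), mgS ε (c' (h.1+1))) *
        ((((J+1) + c' (J+2) : ℕ) : ℝ) +
          ∑ g : Fin (J+1), mgT ε (c' (g.1+1)) / mgS ε (c' (g.1+1)))) := rfl
  rw [E1, E2, E1', E2']
  simp only [hcc, Fin.prod_univ_castSucc, Fin.sum_univ_castSucc, Fin.coe_castSucc,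
    Fin.val_last, hfix, Equiv.swap_apply_left, Equiv.swap_apply_right]
  exact my_core ε hε0 hε1 J (c (J+1)) (c (J+2)) (hpos _ (by omega) (by omega)) hba
    (∏ h : Fin J, mgS ε (c (h.1+1)))
    (∑ g : Fin J, mgT ε (c (g.1+1)) / mgS ε (c (g.1+1)))
    (Finset.prod_pos fun h _ =>
      mgS_pos hε0.le (hpos (h.1+1) (by omega) (by have := h.2; omega)))
    (Finset.sum_nonneg fun g _ => div_nonneg (mgT_nonneg hε0.le _)
      (mgS_pos hε0.le (hpos (g.1+1) (by omega) (by have := g.2; omega))).le)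

open Finset in
lemma my_succ_pos (ε : ℝ) (hε0 : 0 < ε) (hε1 : ε < 1) (K : ℕ) (c : ℕ → ℕ)
    (hc : ∀ x ∈ Finset.Icc 1 K, 0 < c x) : 0 < succProb ε K c := by
  unfold succProb
  refine Finset.prod_pos fun j hj => ?_
  have h1 : ε ^ c j < 1 := pow_lt_one₀ hε0.le hε1 (by have := hc j hj; omega)
  linarith

open Finset in
lemma my_Sbar (ε : ℝ) (hε0 : 0 < ε) (K : ℕ) (c : ℕ → ℕ)
    (hc : ∀ x ∈ Finset.Icc 1 K, 0 < c x) :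
    Sbar ε K c = ((1-ε)^K / succProb ε K c) *
      ((∏ h : Fin K, mgS ε (c (h.1+1))) *
        ((K : ℝ) + ∑ g : Fin K, mgT ε (c (g.1+1)) / mgS ε (c (g.1+1)))) := by
  unfold Sbar
  congr 1
  have hm : ∀ h : Fin K, 1 ≤ c (h.1+1) := by
    intro h; have := h.2
    exact hc _ (by simp only [Finset.mem_Icc]; omega)
  have key : ∑ i : (h : Fin K) → Fin (c (h.1+1)),
      ((K + ∑ h, (i h).1 : ℕ) : ℝ) * ε ^ (∑ h, (i h).1)
      = (∏ h : Fin K, mgS ε (c (h.1+1))) *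
        ((K : ℝ) + ∑ g : Fin K, mgT ε (c (g.1+1)) / mgS ε (c (g.1+1))) :=
    my_key ε hε0.le K (fun h => c (h.1+1)) hm K
  rw [← key]
  refine Finset.sum_congr rfl fun i _ => ?_
  have e : (∑ h, (i h).1) + K = K + ∑ h, (i h).1 := Nat.add_comm _ _
  rw [e]

open Finset in
lemma my_Dbar (ε : ℝ) (hε0 : 0 < ε) (K : ℕ) (c : ℕ → ℕ)
    (hc : ∀ x ∈ Finset.Icc 1 K, 0 < c x) :
    Dbar ε K c = (1 / succProb ε K c) * ∑ j ∈ Finset.Icc 1 K, mG ε c j := by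
  unfold Dbar
  congr 1
  refine Finset.sum_congr rfl fun j hj => ?_
  simp only [Finset.mem_Icc] at hj
  refine my_inner ε hε0.le j c fun h => ?_
  have := h.2
  exact hc _ (by simp only [Finset.mem_Icc]; omega)

open Finset in
lemma my_main (ε : ℝ) (hε0 : 0 < ε) (hε1 : ε < 1) (K : ℕ) (J : ℕ)
    (hJK : J + 2 ≤ K) (c : ℕ → ℕ) (hc : ∀ x ∈ Finset.Icc 1 K, 0 < c x)
    (hba : c (J+2) < c (J+1)) :
    PAoI ε K (fun x => c ((Equiv.swap (J+1) (J+2)) x)) < PAoI ε K c := by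
  set c' : ℕ → ℕ := fun x => c ((Equiv.swap (J+1) (J+2)) x) with hc'
  have hcc : ∀ y, c' y = c ((Equiv.swap (J+1) (J+2)) y) := fun y => rfl
  have hc'pos : ∀ x ∈ Finset.Icc 1 K, 0 < c' x := fun x hx =>
    hc _ (my_swap_mem K J hJK x hx)
  have hp : succProb ε K c' = succProb ε K c := by
    unfold succProb
    exact Finset.prod_nbij' (fun x => (Equiv.swap (J+1) (J+2)) x)
      (fun x => (Equiv.swap (J+1) (J+2)) x) (my_swap_mem K J hJK) (my_swap_mem K J hJK)
      (fun x _ => Equiv.swap_apply_self _ _ x) (fun x _ => Equiv.swap_apply_self _ _ x)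
      (fun x _ => rfl)
  have hS : Sbar ε K c' = Sbar ε K c := by
    rw [my_Sbar ε hε0 K c' hc'pos, my_Sbar ε hε0 K c hc, hp]
    have e1 : ∏ h : Fin K, mgS ε (c' (h.1+1)) = ∏ h : Fin K, mgS ε (c (h.1+1)) :=
      my_prod_swap K J hJK (fun y => mgS ε (c y))
    have e2 : ∑ g : Fin K, mgT ε (c' (g.1+1)) / mgS ε (c' (g.1+1))
        = ∑ g : Fin K, mgT ε (c (g.1+1)) / mgS ε (c (g.1+1)) :=
      my_sum_swap K J hJK (fun y => mgT ε (c y) / mgS ε (c y))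
    rw [e1, e2]
  have hD : Dbar ε K c' < Dbar ε K c := by
    rw [my_Dbar ε hε0 K c' hc'pos, my_Dbar ε hε0 K c hc, hp]
    have hppos : 0 < succProb ε K c := my_succ_pos ε hε0 hε1 K c hc
    have hinv : 0 < 1 / succProb ε K c := by positivity
    apply mul_lt_mul_of_pos_left ?_ hinv
    have hsub : ({J+1, J+2} : Finset ℕ) ⊆ Finset.Icc 1 K := by
      intro x hx
      simp only [Finset.mem_insert, Finset.mem_singleton] at hx
      rcases hx with rfl | rfl <;> simp only [Finset.mem_Icc] <;> omega
    rw [← Finset.sum_sdiff hsub (f := fun j => mG ε c' j),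
        ← Finset.sum_sdiff hsub (f := fun j => mG ε c j)]
    have heq : ∑ x ∈ Finset.Icc 1 K \ {J+1, J+2}, mG ε c' x
        = ∑ x ∈ Finset.Icc 1 K \ {J+1, J+2}, mG ε c x := by
      refine Finset.sum_congr rfl fun x hx => ?_
      rw [Finset.mem_sdiff, Finset.mem_Icc, Finset.mem_insert, Finset.mem_singleton] at hx
      push_neg at hx
      exact my_mG_eq ε J c c' hcc x hx.1.1 hx.2.1 hx.2.2
    rw [heq]
    have hpair : ∑ x ∈ ({J+1, J+2} : Finset ℕ), mG ε c' x
        < ∑ x ∈ ({J+1, J+2} : Finset ℕ), mG ε c x := by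
      rw [Finset.sum_pair (by omega : J+1 ≠ J+2), Finset.sum_pair (by omega : J+1 ≠ J+2)]
      exact my_pair ε hε0 hε1 J c c' hcc
        (fun y h1 h2 => hc y (by simp only [Finset.mem_Icc]; omega)) hba
    exact add_lt_add_right hpair _
  show PAoI ε K c' < PAoI ε K c
  unfold PAoI
  linarith

/-- Theorem 6 of the paper: any policy minimizing the average peak AoI has nondecreasing
failure-tolerance thresholds `c*_1 ≤ c*_2 ≤ ⋯ ≤ c*_K`. -/
theorem stmt13 (ε : ℝ) (hε0 : 0 < ε) (hε1 : ε < 1) (K : ℕ) (hK : 0 < K)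
    (cstar : ℕ → ℕ) (hcs : ∀ j ∈ Finset.Icc 1 K, 0 < cstar j)
    (hopt : ∀ c : ℕ → ℕ, (∀ j ∈ Finset.Icc 1 K, 0 < c j) →
      PAoI ε K cstar ≤ PAoI ε K c) :
    ∀ i ∈ Finset.Icc 1 K, ∀ j ∈ Finset.Icc 1 K, i ≤ j → cstar i ≤ cstar j := by
  have adj : ∀ J : ℕ, J + 2 ≤ K → cstar (J+1) ≤ cstar (J+2) := by
    intro J hJ
    by_contra hlt
    push_neg at hlt
    have h1 := my_main ε hε0 hε1 K J hJ cstar hcs hlt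
    have h2 := hopt (fun x => cstar ((Equiv.swap (J+1) (J+2)) x))
      (fun x hx => hcs _ (my_swap_mem K J hJ x hx))
    linarith
  intro i hi j hj hij
  simp only [Finset.mem_Icc] at hi hj
  have main : ∀ n : ℕ, i ≤ n → n ≤ K → cstar i ≤ cstar n := by
    intro n
    induction n with
    | zero => intro h1 _; exact absurd h1 (by omega)
    | succ n ih =>
      intro h1 h2
      rcases Nat.eq_or_lt_of_le h1 with he | hlt
      · exact le_of_eq (congrArg cstar he)
      · have hin : i ≤ n := by omega
        have step : cstar n ≤ cstar (n+1) := by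
          have h1n : 1 ≤ n := le_trans hi.1 hin
          have hadj := adj (n-1) (by omega)
          have e1 : n - 1 + 1 = n := by omega
          have e2 : n - 1 + 2 = n + 1 := by omega
          rwa [e1, e2] at hadj
        exact le_trans (ih hin (by omega)) step
  exact main j hij hj.2
end
end

section
/- Fix a real ε with 0 < ε < 1 and take K = 2. There exists a positive integer c* with ⌈1/(1−ε)⌉ ≤ c* ≤ ⌈(1+ε)/(1−ε)⌉ such that PAoI((1, c*)) ≤ PAoI((1, c)) for every positive integer c. -/
open Finset

noncomputable section

/-! ### Auxiliary definitions and lemmas for `stmt17` -/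

lemma fin_to_range_aux (n m : ℕ) (G : ℕ → ℕ → ℝ) :
    ∑ x : Fin n, ∑ y : Fin m, G x.1 y.1
      = ∑ x ∈ Finset.range n, ∑ y ∈ Finset.range m, G x y := by
  rw [Fin.sum_univ_eq_sum_range (fun x => ∑ y : Fin m, G x y.1) n]
  exact Finset.sum_congr rfl fun x _ => Fin.sum_univ_eq_sum_range (fun y => G x y) m

lemma sum_pi_two_aux (f : Fin 2 → ℕ) (F : ℕ → ℝ) :
    ∑ i : (h : Fin 2) → Fin (f h), F (∑ h, (i h).1)
      = ∑ x ∈ Finset.range (f 0), ∑ y ∈ Finset.range (f 1), F (x + y) := by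
  rw [← Equiv.sum_comp (piFinTwoEquiv (fun h => Fin (f h))).symm
      (fun i => F (∑ h, (i h).1)), ← fin_to_range_aux (f 0) (f 1) (fun x y => F (x + y))]
  simp [piFinTwoEquiv, Fin.sum_univ_two, Fintype.sum_prod_type]

lemma sum_pi_one_aux (f : Fin 1 → ℕ) (F : ℕ → ℝ) :
    ∑ i : (h : Fin 1) → Fin (f h), F (∑ h, (i h).1)
      = ∑ x ∈ Finset.range (f 0), F x := by
  rw [← Equiv.sum_comp (Equiv.piUnique (fun h : Fin 1 => Fin (f h))).symm
      (fun i => F (∑ h, (i h).1)), ← Fin.sum_univ_eq_sum_range (fun x => F x) (f 0)]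
  refine Finset.sum_congr rfl fun x _ => ?_
  congr 1

lemma sum_pi_zero_aux (f : Fin 0 → ℕ) (F : ℕ → ℝ) :
    ∑ i : (h : Fin 0) → Fin (f h), F (∑ h, (i h).1) = F 0 := by
  simp [Fintype.sum_unique]

lemma succProb_two (ε : ℝ) (n : ℕ) :
    succProb ε 2 (fun j => if j = 2 then n else 1) = (1 - ε) * (1 - ε ^ n) := by
  have h : Finset.Icc 1 2 = ({1, 2} : Finset ℕ) := rfl
  rw [succProb, h, Finset.prod_pair (by norm_num)]
  norm_num

lemma Sbar_two (ε : ℝ) (n : ℕ) :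
    Sbar ε 2 (fun j => if j = 2 then n else 1) =
      ((1 - ε) ^ 2 / ((1 - ε) * (1 - ε ^ n))) *
        ∑ y ∈ Finset.range n, ((y + 2 : ℕ) : ℝ) * ε ^ y := by
  rw [Sbar, succProb_two, sum_pi_two_aux (fun h => if h.1 + 1 = 2 then n else 1)
    (fun s => ((s + 2 : ℕ) : ℝ) * ε ^ s)]
  norm_num

lemma Dbar_two (ε : ℝ) (n : ℕ) :
    Dbar ε 2 (fun j => if j = 2 then n else 1) =
      (1 / ((1 - ε) * (1 - ε ^ n))) * (ε + (1 - ε) * ε ^ n * ((1 + n : ℕ) : ℝ)) := by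
  rw [Dbar, succProb_two, show Finset.Icc 1 2 = ({1, 2} : Finset ℕ) from rfl,
    Finset.sum_pair (by norm_num)]
  rw [sum_pi_zero_aux (fun h : Fin 0 => if h.1 + 1 = 2 then n else 1)
    (fun s => (1 - ε) ^ (1 - 1) * ε ^ ((if (1:ℕ) = 2 then n else 1) + s) *
      (((1 - 1) + (if (1:ℕ) = 2 then n else 1) + s : ℕ) : ℝ))]
  rw [sum_pi_one_aux (fun h : Fin 1 => if h.1 + 1 = 2 then n else 1)
    (fun s => (1 - ε) ^ (2 - 1) * ε ^ ((if (2:ℕ) = 2 then n else 1) + s) *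
      (((2 - 1) + (if (2:ℕ) = 2 then n else 1) + s : ℕ) : ℝ))]
  norm_num

lemma geom_aux (ε : ℝ) (n : ℕ) :
    (1 - ε) ^ 2 * ∑ y ∈ Finset.range n, ((y + 2 : ℕ) : ℝ) * ε ^ y
      = 2 - ε - ((n : ℝ) + 2) * ε ^ n + ((n : ℝ) + 1) * ε ^ (n + 1) := by
  induction n with
  | zero => simp
  | succ m ih => rw [Finset.sum_range_succ, mul_add, ih]; push_cast; ring

/-- the non-constant part of the peak AoI, up to a `1/(1-ε)` factor -/
def gfun (ε : ℝ) (n : ℕ) : ℝ := ε ^ n * (1 - n * (1 - ε)) / (1 - ε ^ n)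

/-- the sign of `gfun ε (n+1) - gfun ε n` -/
def hfun (ε : ℝ) (n : ℕ) : ℝ := (n : ℝ) * (1 - ε) - 1 - ε + ε ^ (n + 1)

lemma PAoI_closed (ε : ℝ) (hε0 : 0 < ε) (hε1 : ε < 1) (n : ℕ) (hn : 1 ≤ n) :
    PAoI ε 2 (fun j => if j = 2 then n else 1)
      = 4 + 3 * ε / (1 - ε) + gfun ε n / (1 - ε) := by
  have h1 : (1 : ℝ) - ε ≠ 0 := by nlinarith
  have h2 : (1 : ℝ) - ε ^ n ≠ 0 := by
    have := pow_lt_one₀ hε0.le hε1 (by omega : n ≠ 0)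
    nlinarith
  have hA : (∑ y ∈ Finset.range n, ((y + 2 : ℕ) : ℝ) * ε ^ y)
      = (2 - ε - ((n : ℝ) + 2) * ε ^ n + ((n : ℝ) + 1) * ε ^ (n + 1)) / (1 - ε) ^ 2 := by
    rw [eq_div_iff (pow_ne_zero 2 h1), mul_comm]; exact geom_aux ε n
  rw [PAoI, Sbar_two, Dbar_two, hA, gfun]
  push_cast
  field_simp
  ring

lemma gdiff (ε : ℝ) (hε0 : 0 < ε) (hε1 : ε < 1) (n : ℕ) (hn : 1 ≤ n) :
    gfun ε (n + 1) - gfun ε n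
      = (1 - ε) * ε ^ n * hfun ε n / ((1 - ε ^ n) * (1 - ε ^ (n + 1))) := by
  have h2 : (1 : ℝ) - ε ^ n ≠ 0 := by
    have := pow_lt_one₀ hε0.le hε1 (by omega : n ≠ 0)
    nlinarith
  have h3 : (1 : ℝ) - ε ^ (n + 1) ≠ 0 := by
    have := pow_lt_one₀ hε0.le hε1 (by omega : n + 1 ≠ 0)
    nlinarith
  rw [gfun, gfun, hfun]
  field_simp
  push_cast
  ring

lemma denom_pos (ε : ℝ) (hε0 : 0 < ε) (hε1 : ε < 1) (n : ℕ) (hn : 1 ≤ n) :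
    0 < (1 - ε ^ n) * (1 - ε ^ (n + 1)) := by
  have a := pow_lt_one₀ hε0.le hε1 (by omega : n ≠ 0)
  have b := pow_lt_one₀ hε0.le hε1 (by omega : n + 1 ≠ 0)
  nlinarith

lemma g_step_ge (ε : ℝ) (hε0 : 0 < ε) (hε1 : ε < 1) (n : ℕ) (hn : 1 ≤ n)
    (h : 0 ≤ hfun ε n) : gfun ε n ≤ gfun ε (n + 1) := by
  rw [← sub_nonneg, gdiff ε hε0 hε1 n hn]
  apply div_nonneg _ (denom_pos ε hε0 hε1 n hn).le
  exact mul_nonneg (mul_nonneg (by linarith) (pow_pos hε0 n).le) h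

lemma g_step_le (ε : ℝ) (hε0 : 0 < ε) (hε1 : ε < 1) (n : ℕ) (hn : 1 ≤ n)
    (h : hfun ε n ≤ 0) : gfun ε (n + 1) ≤ gfun ε n := by
  rw [← sub_nonpos, gdiff ε hε0 hε1 n hn]
  apply div_nonpos_of_nonpos_of_nonneg _ (denom_pos ε hε0 hε1 n hn).le
  have h2 : (0:ℝ) ≤ (1 - ε) * ε ^ n := mul_nonneg (by linarith) (pow_pos hε0 n).le
  exact mul_nonpos_of_nonneg_of_nonpos h2 h

lemma hfun_mono (ε : ℝ) (hε0 : 0 < ε) (hε1 : ε < 1) : Monotone (hfun ε) := by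
  apply monotone_nat_of_le_succ
  intro n
  have b := pow_lt_one₀ hε0.le hε1 (by omega : n + 2 ≠ 0)
  have c := pow_pos hε0 (n + 1)
  have d := pow_pos hε0 (n + 2)
  have e1 : ε ^ (n + 1) ≤ 1 := pow_le_one₀ hε0.le hε1.le
  have e2 : ε ^ (n + 1 + 1) = ε ^ (n + 1) * ε := pow_succ ε (n + 1)
  rw [hfun, hfun]
  push_cast
  nlinarith

/-- Theorem 8 of the paper (`K = 2`, `c_1 = 1`): there is an optimal second threshold
`c*` for peak AoI minimization with `⌈1/(1-ε)⌉ ≤ c* ≤ ⌈(1+ε)/(1-ε)⌉`. -/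
theorem stmt17 (ε : ℝ) (hε0 : 0 < ε) (hε1 : ε < 1) :
    ∃ cstar : ℕ,
      ⌈1 / (1 - ε)⌉₊ ≤ cstar ∧ cstar ≤ ⌈(1 + ε) / (1 - ε)⌉₊ ∧
      ∀ c2 : ℕ, 0 < c2 →
        PAoI ε 2 (fun j => if j = 2 then cstar else 1) ≤
          PAoI ε 2 (fun j => if j = 2 then c2 else 1) := by
  classical
  have hone : (0:ℝ) < 1 - ε := by linarith
  set M := ⌈(1 + ε) / (1 - ε)⌉₊ with hM
  have hQM : 1 ≤ M ∧ 0 ≤ hfun ε M := by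
    constructor
    · rw [hM, Nat.one_le_ceil_iff]
      positivity
    · have h1 : ((1 + ε) / (1 - ε) : ℝ) ≤ M := Nat.le_ceil _
      have h2 : (1 + ε : ℝ) ≤ M * (1 - ε) := by
        rw [div_le_iff₀ hone] at h1; linarith
      have h3 : (0:ℝ) < ε ^ (M + 1) := pow_pos hε0 _
      rw [hfun]; nlinarith
  have hex : ∃ n, 1 ≤ n ∧ 0 ≤ hfun ε n := ⟨M, hQM⟩
  set cstar := Nat.find hex with hc
  obtain ⟨hc1, hc2⟩ : 1 ≤ cstar ∧ 0 ≤ hfun ε cstar := Nat.find_spec hex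
  have hcM : cstar ≤ M := Nat.find_le hQM
  have hmin : ∀ k, 1 ≤ k → k < cstar → hfun ε k < 0 := by
    intro k hk1 hk2
    have hnk := Nat.find_min hex hk2
    push_neg at hnk
    exact hnk hk1
  -- lower bound
  have hlow : ⌈1 / (1 - ε)⌉₊ ≤ cstar := by
    by_contra hcon
    push_neg at hcon
    have h1 : (cstar : ℝ) < 1 / (1 - ε) := Nat.lt_ceil.mp hcon
    have h2 : (cstar : ℝ) * (1 - ε) < 1 := by
      rw [lt_div_iff₀ hone] at h1; linarith
    have h3 : ε ^ (cstar + 1) < ε := by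
      calc ε ^ (cstar + 1) ≤ ε ^ 2 :=
            pow_le_pow_of_le_one hε0.le hε1.le (by omega)
        _ < ε := by nlinarith
    rw [hfun] at hc2
    nlinarith
  -- optimality of gfun at cstar
  have hup : ∀ d : ℕ, gfun ε cstar ≤ gfun ε (cstar + d) := by
    intro d
    induction d with
    | zero => simp
    | succ e ih =>
        have h1 : 1 ≤ cstar + e := by omega
        have h2 : 0 ≤ hfun ε (cstar + e) :=
          le_trans hc2 (hfun_mono ε hε0 hε1 (by omega : cstar ≤ cstar + e))
        calc gfun ε cstar ≤ gfun ε (cstar + e) := ih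
          _ ≤ gfun ε (cstar + e + 1) := g_step_ge ε hε0 hε1 _ h1 h2
        
  have hdown : ∀ d k : ℕ, 1 ≤ k → k + d = cstar → gfun ε cstar ≤ gfun ε k := by
    intro d
    induction d with
    | zero => intro k _ h; rw [← h]; simp
    | succ e ih =>
        intro k hk1 hk2
        have h1 : gfun ε cstar ≤ gfun ε (k + 1) := ih (k + 1) (by omega) (by omega)
        have h2 : hfun ε k < 0 := hmin k hk1 (by omega)
        exact le_trans h1 (g_step_le ε hε0 hε1 k hk1 h2.le)
  have hopt : ∀ n : ℕ, 1 ≤ n → gfun ε cstar ≤ gfun ε n := by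
    intro n hn
    rcases le_or_gt cstar n with h | h
    · have := hup (n - cstar); rwa [Nat.add_sub_cancel' h] at this
    · exact hdown (cstar - n) n hn (by omega)
  refine ⟨cstar, hlow, hcM, fun c2 hc2' => ?_⟩
  rw [PAoI_closed ε hε0 hε1 cstar hc1, PAoI_closed ε hε0 hε1 c2 hc2']
  have := hopt c2 hc2'
  gcongr
end
end
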